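/- arXiv:2106.07463 — 6 statements merged into one kernel-verified Lean document; each statement's English description precedes it below -/
import Mathlib

section
/- Let h : ℝ^d → ℝ ∪ {+∞} be proper, convex, lower semicontinuous with bounded domain, and let h̃ be its perspective function. Then for (θ,x),(θ*,x*) ∈ ℝ × ℝ^d, one has (θ*,x*) ∈ ∂h̃(θ,x) if and only if either [h*(x*) + θ* ≤ 0 and (θ,x) = (0,0)], or [θ > 0, h*(x*) + θ* = 0, and h(x/θ) + h*(x*) − ⟨x/θ, x*⟩ = 0]. -/
noncomputable section
open Finset Filter Topology Bornology
open scoped Classical Pointwise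

/-- Fenchel conjugate of a function on a finite coordinate space. -/
def conjFn {d : Type*} [Fintype d] (g : (d → ℝ) → EReal) (y : d → ℝ) : EReal :=
  ⨆ x : d → ℝ, (↑(∑ i, x i * y i) : EReal) - g x

/-- Fenchel conjugate, scalar case. -/
def conjR (g : ℝ → EReal) (y : ℝ) : EReal :=
  ⨆ x : ℝ, (↑(x * y) : EReal) - g x

/-- Subdifferential (empty where `g = ⊤`). -/
def subdiffFn {d : Type*} [Fintype d] (g : (d → ℝ) → EReal) (x : d → ℝ) : Set (d → ℝ) :=
  {p | g x ≠ ⊤ ∧ ∀ x', g x + (↑(∑ i, p i * (x' i - x i)) : EReal) ≤ g x'}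

def subdiffR (g : ℝ → EReal) (x : ℝ) : Set ℝ :=
  {p | g x ≠ ⊤ ∧ ∀ x', g x + (↑(p * (x' - x)) : EReal) ≤ g x'}

def EProper {E : Type*} (g : E → EReal) : Prop := (∃ x, g x ≠ ⊤) ∧ ∀ x, g x ≠ ⊥

def EConvexOn {E : Type*} [AddCommMonoid E] [SMul ℝ E] (g : E → EReal) : Prop :=
  ∀ x y : E, ∀ a b : ℝ, 0 ≤ a → 0 ≤ b → a + b = 1 →
    g (a • x + b • y) ≤ (a : EReal) * g x + (b : EReal) * g y

def EStrictConvexOn {E : Type*} [AddCommMonoid E] [SMul ℝ E] (g : E → EReal) : Prop :=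
  ∀ x y : E, x ≠ y → g x ≠ ⊤ → g y ≠ ⊤ → ∀ a b : ℝ, 0 < a → 0 < b → a + b = 1 →
    g (a • x + b • y) < (a : EReal) * g x + (b : EReal) * g y

/-- Perspective function. -/
def persp {d : Type*} [Fintype d] (h : (d → ℝ) → EReal) (θ : ℝ) (x : d → ℝ) : EReal :=
  if 0 < θ then (θ : EReal) * h (θ⁻¹ • x)
  else if θ = 0 ∧ x = 0 then 0 else ⊤

/-- The simplex `Δ(S)`. -/
def simplex (n : ℕ) : Set (Fin n → ℝ) :=
  {ρ | (∀ y, ρ y ∈ Set.Icc (0 : ℝ) 1) ∧ ∑ y, ρ y = 1}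

abbrev Msp (T n : ℕ) := Fin (T + 1) → Fin n → ℝ
abbrev Wsp (T n : ℕ) := Fin T → Fin n → Fin n → ℝ
abbrev Psp (T : ℕ) := Fin T → ℝ
abbrev Csp (T n : ℕ) := Msp T n × Wsp T n × Msp T n × Psp T
abbrev Ksp (T n : ℕ) := Msp T n × Msp T n × Psp T
abbrev LSp (T n : ℕ) := Fin T → Fin n → (Fin n → ℝ) → EReal
abbrev FSp (T n : ℕ) := Fin (T + 1) → (Fin n → ℝ) → EReal
abbrev PhiSp (T : ℕ) := Fin T → ℝ → EReal
abbrev ASp (T n : ℕ) := Fin T → Fin n → Fin n → ℝ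

variable {T n : ℕ}

def opA (α : ASp T n) (w : Wsp T n) (t : Fin T) : ℝ := ∑ x, ∑ y, w t x y * α t x y

def opS (w : Wsp T n) (s : Fin (T + 1)) (x : Fin n) : ℝ :=
  if h : (s : ℕ) = 0 then 0
  else ∑ y, w ⟨(s : ℕ) - 1, by have := s.isLt; omega⟩ y x

def mbar0 (m0 : Fin n → ℝ) (s : Fin (T + 1)) (x : Fin n) : ℝ := if s = 0 then m0 x else 0

def Qcpl (α : ASp T n) (m : Msp T n) (π : Wsp T n) (t : Fin T) : ℝ :=
  ∑ x, ∑ y, m t.castSucc x * π t x y * α t x y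

def IsKol (m0 : Fin n → ℝ) (π : Wsp T n) (m : Msp T n) : Prop :=
  (∀ x, m 0 x = m0 x) ∧
    ∀ (t : Fin T) (x : Fin n), m t.succ x = ∑ y, m t.castSucc y * π t y x

def InDelta (π : Wsp T n) : Prop := ∀ t x, π t x ∈ simplex n

def ConvAssumption (ℓ : LSp T n) (F : FSp T n) (φ : PhiSp T) : Prop :=
  (∀ t x, EProper (ℓ t x) ∧ EConvexOn (ℓ t x) ∧ LowerSemicontinuous (ℓ t x) ∧
    ∀ ρ, ℓ t x ρ ≠ ⊤ → ρ ∈ simplex n) ∧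
  (∀ s, EProper (F s) ∧ EConvexOn (F s) ∧ LowerSemicontinuous (F s)) ∧
  (∀ t, EProper (φ t) ∧ EConvexOn (φ t) ∧ LowerSemicontinuous (φ t))

def Jpot (ℓ : LSp T n) (F : FSp T n) (φ : PhiSp T) (α : ASp T n)
    (m : Msp T n) (π : Wsp T n) : EReal :=
  (∑ t, ∑ x, (↑(m t.castSucc x) : EReal) * ℓ t x (π t x)) +
    (∑ t, φ t (Qcpl α m π t)) + ∑ s, F s (m s)

def Jtil (ℓ : LSp T n) (F : FSp T n) (φ : PhiSp T) (α : ASp T n)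
    (m : Msp T n) (w : Wsp T n) : EReal :=
  (∑ t, ∑ x, persp (ℓ t x) (m t.castSucc x) (w t x)) +
    (∑ t, φ t (opA α w t)) + ∑ s, F s (m s)

def FeasP (m0 : Fin n → ℝ) (p : Msp T n × Wsp T n) : Prop := InDelta p.2 ∧ IsKol m0 p.2 p.1

def FeasPt (m0 : Fin n → ℝ) (p : Msp T n × Wsp T n) : Prop :=
  ∀ s x, opS p.2 s x - p.1 s x + mbar0 m0 s x = 0

def valP (ℓ : LSp T n) (F : FSp T n) (φ : PhiSp T) (α : ASp T n) (m0 : Fin n → ℝ) : EReal :=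
  ⨅ p ∈ {p : Msp T n × Wsp T n | FeasP m0 p}, Jpot ℓ F φ α p.1 p.2

def valPt (ℓ : LSp T n) (F : FSp T n) (φ : PhiSp T) (α : ASp T n) (m0 : Fin n → ℝ) : EReal :=
  ⨅ p ∈ {p : Msp T n × Wsp T n | FeasPt m0 p}, Jtil ℓ F φ α p.1 p.2

def IsSolP (ℓ : LSp T n) (F : FSp T n) (φ : PhiSp T) (α : ASp T n) (m0 : Fin n → ℝ)
    (p : Msp T n × Wsp T n) : Prop :=
  FeasP m0 p ∧ ∀ q, FeasP m0 q → Jpot ℓ F φ α p.1 p.2 ≤ Jpot ℓ F φ α q.1 q.2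

def IsSolPt (ℓ : LSp T n) (F : FSp T n) (φ : PhiSp T) (α : ASp T n) (m0 : Fin n → ℝ)
    (p : Msp T n × Wsp T n) : Prop :=
  FeasPt m0 p ∧ ∀ q, FeasPt m0 q → Jtil ℓ F φ α p.1 p.2 ≤ Jtil ℓ F φ α q.1 q.2

def dpCost (ℓ : LSp T n) (α : ASp T n) (u : Msp T n) (P : Psp T)
    (t : Fin T) (x : Fin n) : EReal :=
  conjFn (ℓ t x) (fun y => -(α t x y * P t + u t.succ y))

def FeasD (ℓ : LSp T n) (α : ASp T n) (k : Ksp T n) : Prop :=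
  (∀ t x, (↑(k.1 t.castSucc x) : EReal) + dpCost ℓ α k.1 k.2.2 t x ≤ ↑(k.2.1 t.castSucc x)) ∧
  ∀ x, k.1 (Fin.last T) x = k.2.1 (Fin.last T) x

def Dobj (F : FSp T n) (φ : PhiSp T) (m0 : Fin n → ℝ) (k : Ksp T n) : EReal :=
  (↑(∑ x, m0 x * k.1 0 x) : EReal) - (∑ t, conjR (φ t) (k.2.2 t)) -
    ∑ s, conjFn (F s) (k.2.1 s)

def valD (ℓ : LSp T n) (F : FSp T n) (φ : PhiSp T) (α : ASp T n) (m0 : Fin n → ℝ) : EReal :=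
  ⨆ k ∈ {k : Ksp T n | FeasD ℓ α k}, Dobj F φ m0 k

def IsSolD (ℓ : LSp T n) (F : FSp T n) (φ : PhiSp T) (α : ASp T n) (m0 : Fin n → ℝ)
    (k : Ksp T n) : Prop :=
  FeasD ℓ α k ∧ ∀ k', FeasD ℓ α k' → Dobj F φ m0 k' ≤ Dobj F φ m0 k

/-- `IsDP ℓ α γ P u` : `u = U[γ,P]`, i.e. `u` solves the dynamic programming equation. -/
def IsDP (ℓ : LSp T n) (α : ASp T n) (γ : Msp T n) (P : Psp T) (u : Msp T n) : Prop :=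
  (∀ (t : Fin T) (x : Fin n),
    (↑(u t.castSucc x) : EReal) + dpCost ℓ α u P t x = ↑(γ t.castSucc x)) ∧
  ∀ x, u (Fin.last T) x = γ (Fin.last T) x

def valDt (ℓ : LSp T n) (F : FSp T n) (φ : PhiSp T) (α : ASp T n) (m0 : Fin n → ℝ) : EReal :=
  ⨆ k ∈ {k : Ksp T n | IsDP ℓ α k.2.1 k.2.2 k.1}, Dobj F φ m0 k

def IsSolDt (ℓ : LSp T n) (F : FSp T n) (φ : PhiSp T) (α : ASp T n) (m0 : Fin n → ℝ)
    (γ : Msp T n) (P : Psp T) (u : Msp T n) : Prop :=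
  IsDP ℓ α γ P u ∧
    ∀ γ' P' u', IsDP ℓ α γ' P' u' → Dobj F φ m0 (u', γ', P') ≤ Dobj F φ m0 (u, γ, P)

def IsKolPert (m0 : Fin n → ℝ) (ε1 : Msp T n) (π : Wsp T n) (m1 : Msp T n) : Prop :=
  (∀ x, m1 0 x = mbar0 m0 (0 : Fin (T + 1)) x + ε1 0 x) ∧
  ∀ (t : Fin T) (x : Fin n), m1 t.succ x = (∑ y, m1 t.castSucc y * π t y x) - ε1 t.succ x

def qnorm (ε1 ε2 : Msp T n) (ε3 : Psp T) : ℝ :=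
  Real.sqrt ((∑ s, ∑ x, ε1 s x ^ 2) + (∑ s, ∑ x, ε2 s x ^ 2) + ∑ t, ε3 t ^ 2)

def Qualif (ℓ : LSp T n) (F : FSp T n) (φ : PhiSp T) (α : ASp T n) (m0 : Fin n → ℝ) : Prop :=
  ∃ α0 : ℝ, 0 < α0 ∧ ∀ (ε1 ε2 : Msp T n) (ε3 : Psp T), qnorm ε1 ε2 ε3 ≤ α0 →
    ∃ π : Wsp T n, (∀ t x, ℓ t x (π t x) ≠ ⊤) ∧
      ∃ m1 : Msp T n, IsKolPert m0 ε1 π m1 ∧ (∀ s x, 0 ≤ m1 s x) ∧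
        (∀ s, F s (fun x => m1 s x + ε2 s x) ≠ ⊤) ∧
        ∀ t, φ t (Qcpl α m1 π t + ε3 t) ≠ ⊤

def Fobj (ℓ : LSp T n) (F : FSp T n) (φ : PhiSp T) (c : Csp T n) : EReal :=
  (∑ t, ∑ x, persp (ℓ t x) (c.1 t.castSucc x) (c.2.1 t x)) +
    (∑ t, φ t (c.2.2.2 t)) + ∑ s, F s (c.2.2.1 s)

def Gobj (m0 : Fin n → ℝ) (k : Ksp T n) : EReal :=
  if (∀ s x, k.1 s x = -(mbar0 m0 s x)) ∧ k.2.1 = 0 ∧ k.2.2 = 0 then 0 else ⊤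

def Aop (α : ASp T n) (c : Csp T n) : Ksp T n :=
  (fun s x => opS c.2.1 s x - c.1 s x,
   fun s x => c.1 s x - c.2.2.1 s x,
   fun t => opA α c.2.1 t - c.2.2.2 t)

def AstarOp (α : ASp T n) (k : Ksp T n) : Csp T n :=
  (fun s x => k.2.1 s x - k.1 s x,
   fun t x y => α t x y * k.2.2 t + k.1 t.succ y,
   fun s x => -k.2.1 s x,
   fun t => -k.2.2 t)

def cpair (c c' : Csp T n) : ℝ :=
  (∑ s, ∑ x, c.1 s x * c'.1 s x) + (∑ t, ∑ x, ∑ y, c.2.1 t x y * c'.2.1 t x y) +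
    (∑ s, ∑ x, c.2.2.1 s x * c'.2.2.1 s x) + ∑ t, c.2.2.2 t * c'.2.2.2 t

def kpair (k k' : Ksp T n) : ℝ :=
  (∑ s, ∑ x, k.1 s x * k'.1 s x) + (∑ s, ∑ x, k.2.1 s x * k'.2.1 s x) +
    ∑ t, k.2.2 t * k'.2.2 t

def FobjStar (ℓ : LSp T n) (F : FSp T n) (φ : PhiSp T) (c' : Csp T n) : EReal :=
  ⨆ c : Csp T n, (↑(cpair c c') : EReal) - Fobj ℓ F φ c

def GobjStar (m0 : Fin n → ℝ) (k : Ksp T n) : EReal := ↑(-(∑ x, m0 x * k.1 0 x))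

def PfrakObj (ℓ : LSp T n) (F : FSp T n) (φ : PhiSp T) (α : ASp T n) (m0 : Fin n → ℝ)
    (c : Csp T n) : EReal := Fobj ℓ F φ c + Gobj m0 (Aop α c)

def DfrakObj (ℓ : LSp T n) (F : FSp T n) (φ : PhiSp T) (α : ASp T n) (m0 : Fin n → ℝ)
    (k : Ksp T n) : EReal := FobjStar ℓ F φ (-AstarOp α k) + GobjStar m0 k

def IsSolPfrak (ℓ : LSp T n) (F : FSp T n) (φ : PhiSp T) (α : ASp T n) (m0 : Fin n → ℝ)
    (c : Csp T n) : Prop := ∀ c', PfrakObj ℓ F φ α m0 c ≤ PfrakObj ℓ F φ α m0 c'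

def IsSolDfrak (ℓ : LSp T n) (F : FSp T n) (φ : PhiSp T) (α : ASp T n) (m0 : Fin n → ℝ)
    (k : Ksp T n) : Prop := ∀ k', DfrakObj ℓ F φ α m0 k ≤ DfrakObj ℓ F φ α m0 k'

def MFGi (ℓ : LSp T n) (α : ASp T n) (γ : Msp T n) (P : Psp T) (u : Msp T n) : Prop :=
  (∀ (t : Fin T) (x : Fin n), (↑(u t.castSucc x) : EReal) =
      ⨅ ρ ∈ simplex n,
        ℓ t x ρ + ↑(γ t.castSucc x) + ↑(∑ y, ρ y * (α t x y * P t + u t.succ y))) ∧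
  ∀ x, u (Fin.last T) x = γ (Fin.last T) x

def MFGii (ℓ : LSp T n) (α : ASp T n) (π : Wsp T n) (γ : Msp T n) (P : Psp T)
    (u : Msp T n) : Prop :=
  ∀ (t : Fin T) (x : Fin n),
    ℓ t x (π t x) + ↑(γ t.castSucc x) + ↑(∑ y, π t x y * (α t x y * P t + u t.succ y)) =
      (↑(u t.castSucc x) : EReal)

def IsMFGSol (ℓ : LSp T n) (F : FSp T n) (φ : PhiSp T) (α : ASp T n) (m0 : Fin n → ℝ)
    (m : Msp T n) (π : Wsp T n) (u : Msp T n) (γ : Msp T n) (P : Psp T) : Prop :=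
  InDelta π ∧ MFGi ℓ α γ P u ∧ MFGii ℓ α π γ P u ∧ IsKol m0 π m ∧
    (∀ s, γ s ∈ subdiffFn (F s) (m s)) ∧ ∀ t, P t ∈ subdiffR (φ t) (Qcpl α m π t)

/-! The perspective `h̃` is positively homogeneous, so `(θ*, x*)` is a subgradient of `h̃` at
`(θ, x)` iff the linear form `ℓ = ⟨(θ*, x*), ·⟩` minorizes `h̃` and touches it at `(θ, x)`
(test the subgradient inequality at `2 • (θ, x)` and `2⁻¹ • (θ, x)`). Dividing by `θ' > 0`,
`ℓ ≤ h̃` says `θ* + ⟨z, x*⟩ ≤ h z` for all `z`, i.e. `h*(x*) + θ* ≤ 0`. The contact condition is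
automatic at `(0, 0)`, impossible where `h̃ = ⊤`, and for `θ > 0` says that `x / θ` attains the
supremum defining `h*(x*)`, which is then `-θ*`. -/

theorem subgradient_iff_of_posHomogeneous {E : Type*} [AddCommGroup E] [Module ℝ E]
    {g : E → EReal} (hg : ∀ M : ℝ, 0 < M → ∀ v, g (M • v) = M * g v) (ℓ : E →ₗ[ℝ] ℝ)
    {v : E} (hv : g v ≠ ⊥) :
    (g v ≠ ⊤ ∧ ∀ w, g v + ℓ (w - v) ≤ g w) ↔ (∀ w, (ℓ w : EReal) ≤ g w) ∧ g v = ℓ v := by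
  constructor
  · rintro ⟨hv_top, hsub⟩
    have hval : g v = ℓ v := by
      obtain ⟨r, hr⟩ : ∃ r : ℝ, g v = r := ⟨(g v).toReal, (EReal.coe_toReal hv_top hv).symm⟩
      have up := hsub ((2 : ℝ) • v)
      have down := hsub ((2 : ℝ)⁻¹ • v)
      rw [hg _ (by norm_num), hr, map_sub, map_smul, smul_eq_mul, ← EReal.coe_mul,
        ← EReal.coe_add, EReal.coe_le_coe_iff] at up down
      rw [hr, EReal.coe_eq_coe_iff]
      linarith
    refine ⟨fun w => ?_, hval⟩
    have hw := hsub w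
    rwa [hval, map_sub, ← EReal.coe_add, add_sub_cancel] at hw
  · rintro ⟨hle, hval⟩
    refine ⟨hval ▸ EReal.coe_ne_top _, fun w => ?_⟩
    rw [hval, ← EReal.coe_add, map_sub, add_sub_cancel]
    exact hle w

theorem EReal.coe_mul_eq_coe_mul_iff {c : ℝ} (hc : 0 < c) {a : EReal} {r : ℝ} :
    (c : EReal) * a = ↑(c * r) ↔ a = r := by
  induction a with
  | bot =>
    rw [EReal.coe_mul_bot_of_pos hc]
    exact iff_of_false (EReal.bot_ne_coe _) (EReal.bot_ne_coe _)
  | top =>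
    rw [EReal.coe_mul_top_of_pos hc]
    exact iff_of_false (EReal.top_ne_coe _) (EReal.top_ne_coe _)
  | coe a => norm_cast; simp [hc.ne']

theorem EReal.coe_sub_le_coe_iff (a b : ℝ) (y : EReal) :
    (a : EReal) - y ≤ b ↔ ((a - b : ℝ) : EReal) ≤ y := by
  induction y with
  | bot => exact iff_of_false (by simp) (not_le.mpr (EReal.bot_lt_coe _))
  | top => simp
  | coe y => norm_cast; constructor <;> intro <;> linarith

theorem EReal.add_coe_eq_zero_iff (a : EReal) (b : ℝ) : a + b = 0 ↔ a = ↑(-b) := by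
  induction a with
  | bot => exact iff_of_false (by simp) (EReal.bot_ne_coe _)
  | top => exact iff_of_false (by simp) (EReal.top_ne_coe _)
  | coe a => norm_cast; constructor <;> intro <;> linarith

theorem EReal.add_coe_le_zero_iff (a : EReal) (b : ℝ) : a + b ≤ 0 ↔ a ≤ ↑(-b) := by
  rw [← EReal.le_sub_iff_add_le (by simp) (by simp), zero_sub, EReal.coe_neg]

section Perspective

variable {d : Type*} [Fintype d] (h : (d → ℝ) → EReal)

theorem persp_of_pos {θ : ℝ} (hθ : 0 < θ) (x : d → ℝ) : persp h θ x = θ * h (θ⁻¹ • x) :=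
  if_pos hθ

theorem persp_smul {M : ℝ} (hM : 0 < M) (θ : ℝ) (x : d → ℝ) :
    persp h (M * θ) (M • x) = M * persp h θ x := by
  by_cases hθ : 0 < θ
  · rw [persp_of_pos h (mul_pos hM hθ), persp_of_pos h hθ, smul_smul, mul_inv_rev,
      inv_mul_cancel_right₀ hM.ne', EReal.coe_mul, mul_assoc]
  · have hMθ : ¬ 0 < M * θ := by rwa [mul_pos_iff_of_pos_left hM]
    have hzero : M * θ = 0 ∧ M • x = 0 ↔ θ = 0 ∧ x = 0 := by simp [hM.ne']
    unfold persp
    rw [if_neg hMθ, if_neg hθ]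
    by_cases hz : θ = 0 ∧ x = 0
    · simp [hz]
    · rw [if_neg (hzero.not.mpr hz), if_neg hz, EReal.coe_mul_top_of_pos hM]

theorem persp_ne_bot (hh : ∀ z, h z ≠ ⊥) (θ : ℝ) (x : d → ℝ) : persp h θ x ≠ ⊥ := by
  unfold persp
  split_ifs with hθ
  · simp [EReal.mul_ne_bot, hh, hθ.le]
  · simp
  · simp

theorem linear_eq_mul_affine_inv_smul {θ : ℝ} (hθ : θ ≠ 0) (θs : ℝ) (x xs : d → ℝ) :
    θs * θ + ∑ i, xs i * x i = θ * (θs + ∑ i, (θ⁻¹ • x) i * xs i) := by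
  simp only [Pi.smul_apply, smul_eq_mul, mul_add, Finset.mul_sum]
  congr 1
  · ring
  · exact Finset.sum_congr rfl fun i _ => by field_simp

theorem persp_one (x : d → ℝ) : persp h 1 x = h x := by
  rw [persp_of_pos h one_pos, inv_one, one_smul, EReal.coe_one, one_mul]

theorem linear_le_persp_iff (θs : ℝ) (xs : d → ℝ) :
    (∀ θ' x', ((θs * θ' + ∑ i, xs i * x' i : ℝ) : EReal) ≤ persp h θ' x') ↔
      ∀ z, ((θs + ∑ i, z i * xs i : ℝ) : EReal) ≤ h z := by
  constructor
  · intro hle z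
    simpa [persp_one, mul_comm] using hle 1 z
  · intro hle θ' x'
    unfold persp
    split_ifs with hθ h0
    · rw [linear_eq_mul_affine_inv_smul hθ.ne', EReal.coe_mul]
      exact mul_le_mul_of_nonneg_left (hle _) (EReal.coe_nonneg.mpr hθ.le)
    · obtain ⟨rfl, rfl⟩ := h0
      simp
    · exact le_top

theorem conjFn_add_le_zero_iff (θs : ℝ) (xs : d → ℝ) :
    conjFn h xs + θs ≤ 0 ↔ ∀ z, ((θs + ∑ i, z i * xs i : ℝ) : EReal) ≤ h z := by
  rw [EReal.add_coe_le_zero_iff, conjFn, iSup_le_iff]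
  refine forall_congr' fun z => ?_
  rw [EReal.coe_sub_le_coe_iff, sub_neg_eq_add, add_comm]

theorem conjFn_add_le_zero_and_apply_eq_iff (θs : ℝ) (xs z : d → ℝ) :
    (conjFn h xs + θs ≤ 0 ∧ h z = ↑(θs + ∑ i, z i * xs i)) ↔
      conjFn h xs + θs = 0 ∧ h z + conjFn h xs - ↑(∑ i, z i * xs i) = 0 := by
  constructor
  · rintro ⟨hle, hz⟩
    have hconj : conjFn h xs = ↑(-θs) := by
      refine le_antisymm ((EReal.add_coe_le_zero_iff _ _).mp hle) ?_
      calc ((-θs : ℝ) : EReal) = ↑(∑ i, z i * xs i) - h z := by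
            rw [hz, ← EReal.coe_sub]; congr 1; ring
        _ ≤ conjFn h xs := le_iSup (fun y => (↑(∑ i, y i * xs i) : EReal) - h y) z
    refine ⟨(EReal.add_coe_eq_zero_iff _ _).mpr hconj, ?_⟩
    rw [hz, hconj]
    norm_cast
    ring
  · rintro ⟨hzero, hz⟩
    refine ⟨hzero.le, ?_⟩
    rw [(EReal.add_coe_eq_zero_iff _ _).mp hzero] at hz
    generalize h z = a at hz ⊢
    induction a with
    | bot => simp at hz
    | top => simp at hz
    | coe r => norm_cast at hz ⊢; linarith

theorem persp_subgradient_iff (hh : ∀ z, h z ≠ ⊥) (θ θs : ℝ) (x xs : d → ℝ) :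
    (persp h θ x ≠ ⊤ ∧ ∀ (θ' : ℝ) (x' : d → ℝ),
        persp h θ x + (↑(θs * (θ' - θ) + ∑ i, xs i * (x' i - x i)) : EReal) ≤ persp h θ' x') ↔
      conjFn h xs + θs ≤ 0 ∧ persp h θ x = ↑(θs * θ + ∑ i, xs i * x i) := by
  let ℓ : ℝ × (d → ℝ) →ₗ[ℝ] ℝ :=
    θs • LinearMap.fst ℝ ℝ (d → ℝ) + ∑ i, xs i • (LinearMap.proj i ∘ₗ LinearMap.snd ℝ ℝ (d → ℝ))
  have hℓ : ∀ p, ℓ p = θs * p.1 + ∑ i, xs i * p.2 i := fun p => by simp [ℓ]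
  have key := subgradient_iff_of_posHomogeneous (g := fun p : ℝ × (d → ℝ) => persp h p.1 p.2)
    (fun M hM p => persp_smul h hM p.1 p.2) ℓ (v := (θ, x)) (persp_ne_bot h hh θ x)
  simp only [Prod.forall, hℓ, Prod.fst_sub, Prod.snd_sub, Pi.sub_apply] at key
  rw [key, linear_le_persp_iff, conjFn_add_le_zero_iff]

end Perspective

theorem perspective_subdifferential_general {d : ℕ} (h : (Fin d → ℝ) → EReal)
    (hproper : EProper h)
    (θ θs : ℝ) (x xs : Fin d → ℝ) :
    (persp h θ x ≠ ⊤ ∧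
      ∀ (θ' : ℝ) (x' : Fin d → ℝ),
        persp h θ x + (↑(θs * (θ' - θ) + ∑ i, xs i * (x' i - x i)) : EReal) ≤
          persp h θ' x') ↔
    ((conjFn h xs + (↑θs : EReal) ≤ 0 ∧ θ = 0 ∧ x = 0) ∨
     (0 < θ ∧ conjFn h xs + (↑θs : EReal) = 0 ∧
        h (θ⁻¹ • x) + conjFn h xs - (↑(∑ i, (θ⁻¹ * x i) * xs i) : EReal) = 0)) := by
  rw [persp_subgradient_iff h hproper.2]
  by_cases hθ : 0 < θ
  · rw [persp_of_pos h hθ, linear_eq_mul_affine_inv_smul hθ.ne', EReal.coe_mul_eq_coe_mul_iff hθ]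
    simp only [hθ, hθ.ne', false_and, and_false, false_or, true_and]
    exact conjFn_add_le_zero_and_apply_eq_iff h θs xs _
  · by_cases h0 : θ = 0 ∧ x = 0
    · obtain ⟨rfl, rfl⟩ := h0
      simp [persp]
    · have htop : persp h θ x = ⊤ := by simp [persp, hθ, h0]
      simp only [htop, EReal.top_ne_coe, and_false, false_iff, not_or]
      exact ⟨fun hl => h0 hl.2, fun hr => hθ hr.1⟩

/-- characterization of the subdifferential of the perspective
function of a proper convex lsc function with bounded domain
(Lemma 2 of the paper). -/
theorem perspective_subdifferential {d : ℕ} (h : (Fin d → ℝ) → EReal)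
    (hproper : EProper h) (hconv : EConvexOn h) (hlsc : LowerSemicontinuous h)
    (hbdd : Bornology.IsBounded {x | h x ≠ ⊤})
    (θ θs : ℝ) (x xs : Fin d → ℝ) :
    (persp h θ x ≠ ⊤ ∧
      ∀ (θ' : ℝ) (x' : Fin d → ℝ),
        persp h θ x + (↑(θs * (θ' - θ) + ∑ i, xs i * (x' i - x i)) : EReal) ≤
          persp h θ' x') ↔
    ((conjFn h xs + (↑θs : EReal) ≤ 0 ∧ θ = 0 ∧ x = 0) ∨
     (0 < θ ∧ conjFn h xs + (↑θs : EReal) = 0 ∧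
        h (θ⁻¹ • x) + conjFn h xs - (↑(∑ i, (θ⁻¹ * x i) * xs i) : EReal) = 0)) :=
  perspective_subdifferential_general h hproper θ θs x xs

end
end

section
/- The values of problems (P) and (P̃) are equal: val(P) = val(P̃). Moreover, if problem (P) is feasible (there exists (m,π) with π ∈ Δ, m = m^π and J(m,π) < +∞), then both (P) and (P̃) have a nonempty and bounded set of optimal solutions. -/
noncomputable section
open Finset Filter Topology Bornology
open scoped Classical Pointwise

variable {T n : ℕ}

/-! The substitution `w = m π` matches the feasible points of (P) with the feasible points of
(P̃) of finite cost: `m ℓ(π) = ℓ̃(m, m π)` for `m ≥ 0`, and since `dom ℓ ⊆ Δ(S)`, a finite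
perspective `ℓ̃(θ, w)` forces `θ ≥ 0` and `w = θ ρ` with `ρ ∈ Δ(S)`. So the two values agree and
solutions of (P) give solutions of (P̃). The feasible set of (P) is compact, all its entries lying in
`[0, 1]`, and `J` is lower semicontinuous on it, hence (P) has a solution. A solution of (P̃) has
finite cost once (P) is feasible, so it is again of the form `(m, m π)` with entries in `[0, 1]`. -/

namespace EReal

variable {ι : Type*} {s : Finset ι} {f : ι → EReal}

lemma sum_ne_bot (h : ∀ i ∈ s, f i ≠ ⊥) : ∑ i ∈ s, f i ≠ ⊥ :=
  Finset.sum_induction f (· ≠ ⊥) (fun _ _ ha hb => add_ne_bot_iff.2 ⟨ha, hb⟩) zero_ne_bot h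

lemma coe_mul_ne_bot {a : ℝ} (ha : 0 ≤ a) {b : EReal} (hb : b ≠ ⊥) : (a : EReal) * b ≠ ⊥ := by
  rw [mul_ne_bot]
  exact ⟨Or.inl (coe_ne_bot a), Or.inr hb, Or.inl (coe_ne_top a), Or.inl (EReal.coe_nonneg.2 ha)⟩

lemma sum_ne_top_iff_of_ne_bot (h : ∀ i ∈ s, f i ≠ ⊥) :
    ∑ i ∈ s, f i ≠ ⊤ ↔ ∀ i ∈ s, f i ≠ ⊤ := by
  induction s using Finset.cons_induction with
  | empty => simp
  | cons a s ha ih =>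
    simp only [Finset.mem_cons, forall_eq_or_imp] at h ⊢
    rw [Finset.sum_cons, add_ne_top_iff_ne_top₂ h.1 (sum_ne_bot h.2), ih h.2]

end EReal

section Semicontinuity

variable {X : Type*} [TopologicalSpace X] {s : Set X}

lemma LowerSemicontinuousOn.add_of_ne_bot {f g : X → EReal} (hf : LowerSemicontinuousOn f s)
    (hg : LowerSemicontinuousOn g s) (hf' : ∀ x ∈ s, f x ≠ ⊥) (hg' : ∀ x ∈ s, g x ≠ ⊥) :
    LowerSemicontinuousOn (fun x => f x + g x) s :=
  hf.add' hg fun x hx => EReal.continuousAt_add (Or.inr (hg' x hx)) (Or.inl (hf' x hx))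

lemma LowerSemicontinuousOn.finset_sum_of_ne_bot {ι : Type*} (I : Finset ι) {f : ι → X → EReal}
    (hf : ∀ i ∈ I, LowerSemicontinuousOn (f i) s) (hbot : ∀ i ∈ I, ∀ x ∈ s, f i x ≠ ⊥) :
    LowerSemicontinuousOn (fun x => ∑ i ∈ I, f i x) s := by
  induction I using Finset.cons_induction with
  | empty => simpa using lowerSemicontinuousOn_const
  | cons a I ha ih =>
    simp only [Finset.mem_cons, forall_eq_or_imp] at hf hbot
    simp only [Finset.sum_cons]
    exact hf.1.add_of_ne_bot (ih hf.2 hbot.2) hbot.1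
      fun x hx => EReal.sum_ne_bot fun i hi => hbot.2 i hi x hx

lemma LowerSemicontinuousOn.coe_mul_of_nonneg {f : X → ℝ} {g : X → EReal}
    (hf : ContinuousOn f s) (hf0 : ∀ x ∈ s, 0 ≤ f x) (hg : LowerSemicontinuousOn g s)
    (hbot : ∀ x ∈ s, g x ≠ ⊥) : LowerSemicontinuousOn (fun x => (f x : EReal) * g x) s := by
  intro x hx y hy
  -- where `f` vanishes, any real lower bound of `g` near `x` will do
  obtain ⟨c, hcg, hyc⟩ : ∃ c : ℝ, (c : EReal) < g x ∧ y < ((f x * c : ℝ) : EReal) := by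
    rcases (hf0 x hx).eq_or_lt with h0 | hpos
    · obtain ⟨c, -, hc⟩ := EReal.exists_between_coe_real (bot_lt_iff_ne_bot.2 (hbot x hx))
      refine ⟨c, hc, ?_⟩
      simpa [← h0] using hy
    · obtain ⟨r, hyr, hr⟩ := EReal.exists_between_coe_real hy
      have hrg : ((r / f x : ℝ) : EReal) < g x := by
        by_contra! hle
        have := mul_le_mul_of_nonneg_left hle (EReal.coe_nonneg.2 hpos.le)
        rw [← EReal.coe_mul, mul_div_cancel₀ r hpos.ne'] at this
        exact hr.not_ge this
      obtain ⟨c, hrc, hc⟩ := EReal.exists_between_coe_real hrg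
      refine ⟨c, hc, hyr.trans ?_⟩
      rw [EReal.coe_lt_coe_iff, div_lt_iff₀ hpos] at hrc
      exact_mod_cast (by linarith : r < f x * c)
  have hcont : ContinuousWithinAt (fun x => ((f x * c : ℝ) : EReal)) s x :=
    continuous_coe_real_ereal.continuousAt.comp_continuousWithinAt ((hf x hx).mul_const c)
  filter_upwards [hg x hx c hcg, hcont (isOpen_Ioi.mem_nhds hyc), self_mem_nhdsWithin]
    with x' hgx' hyx' hx'
  calc y < ((f x' * c : ℝ) : EReal) := hyx'
    _ = (f x' : EReal) * c := EReal.coe_mul _ _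
    _ ≤ (f x' : EReal) * g x' := mul_le_mul_of_nonneg_left hgx'.le (EReal.coe_nonneg.2 (hf0 x' hx'))

end Semicontinuity

section Simplex

lemma isClosed_simplex : IsClosed (simplex n) := by
  simp only [simplex, Set.ofPred_and, Set.ofPred_forall]
  exact (isClosed_iInter fun y => isClosed_Icc.preimage (continuous_apply y)).inter
    (isClosed_eq (by fun_prop) continuous_const)

lemma mem_simplex_of_nonneg_of_sum_eq_one {ρ : Fin n → ℝ} (h0 : ∀ y, 0 ≤ ρ y)
    (h1 : ∑ y, ρ y = 1) : ρ ∈ simplex n :=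
  ⟨fun y => ⟨h0 y, h1 ▸ Finset.single_le_sum (fun z _ => h0 z) (Finset.mem_univ y)⟩, h1⟩

variable {g : (Fin n → ℝ) → EReal} {θ : ℝ} {x : Fin n → ℝ}

lemma persp_smul_of_nonneg (hθ : 0 ≤ θ) (ρ : Fin n → ℝ) : persp g θ (θ • ρ) = θ * g ρ := by
  rcases hθ.eq_or_lt with rfl | hpos
  · simp [persp]
  · rw [persp, if_pos hpos, smul_smul, inv_mul_cancel₀ hpos.ne', one_smul]

lemma persp_ne_bot_s2 (hg : ∀ ρ, g ρ ≠ ⊥) (θ : ℝ) (x : Fin n → ℝ) : persp g θ x ≠ ⊥ := by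
  unfold persp
  split_ifs with hpos
  · exact EReal.coe_mul_ne_bot hpos.le (hg _)
  all_goals simp

lemma exists_simplex_smul_of_persp_ne_top (hg : ∃ ρ, g ρ ≠ ⊤)
    (hdom : ∀ ρ, g ρ ≠ ⊤ → ρ ∈ simplex n) (h : persp g θ x ≠ ⊤) :
    0 ≤ θ ∧ ∃ ρ ∈ simplex n, x = θ • ρ := by
  unfold persp at h
  split_ifs at h with hpos hzero
  · refine ⟨hpos.le, θ⁻¹ • x, hdom _ fun htop => h ?_, ?_⟩
    · rw [htop, EReal.coe_mul_top_of_pos hpos]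
    · rw [smul_smul, mul_inv_cancel₀ hpos.ne', one_smul]
  · obtain ⟨ρ, hρ⟩ := hg
    exact ⟨hzero.1.ge, ρ, hdom ρ hρ, by simp [hzero.1, hzero.2]⟩
  · exact absurd rfl h

end Simplex

section ChangeOfVariables

variable {ℓ : LSp T n} {F : FSp T n} {φ : PhiSp T} {α : ASp T n} {m0 : Fin n → ℝ}

lemma ConvAssumption.ell_ne_bot (h : ConvAssumption ℓ F φ) (t : Fin T) (x : Fin n) :
    ∀ ρ, ℓ t x ρ ≠ ⊥ :=
  (h.1 t x).1.2

lemma ConvAssumption.F_ne_bot (h : ConvAssumption ℓ F φ) (s : Fin (T + 1)) : ∀ ρ, F s ρ ≠ ⊥ :=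
  (h.2.1 s).1.2

lemma ConvAssumption.phi_ne_bot (h : ConvAssumption ℓ F φ) (t : Fin T) : ∀ r, φ t r ≠ ⊥ :=
  (h.2.2 t).1.2

/-- The change of variables `w = m π` turning (P) into (P̃). -/
def flux (m : Msp T n) (π : Wsp T n) : Wsp T n := fun t x y => m t.castSucc x * π t x y

lemma opS_zero (w : Wsp T n) (x : Fin n) : opS w 0 x = 0 := rfl

lemma opS_succ (w : Wsp T n) (t : Fin T) (x : Fin n) : opS w t.succ x = ∑ y, w t y x := by
  simp [opS, Fin.val_succ]

lemma mbar0_zero (x : Fin n) : mbar0 (T := T) m0 0 x = m0 x := if_pos rfl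

lemma mbar0_succ (t : Fin T) (x : Fin n) : mbar0 m0 t.succ x = 0 := if_neg (Fin.succ_ne_zero t)

lemma feasPt_iff {p : Msp T n × Wsp T n} :
    FeasPt m0 p ↔ (∀ x, p.1 0 x = m0 x) ∧ ∀ t x, p.1 t.succ x = ∑ y, p.2 t y x := by
  simp only [FeasPt, Fin.forall_fin_succ, opS_zero, opS_succ, mbar0_zero, mbar0_succ]
  refine and_congr (forall_congr' fun x => ?_) (forall₂_congr fun t x => ?_) <;>
    constructor <;> intro h <;> linarith

lemma feasPt_flux_iff {m : Msp T n} {π : Wsp T n} :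
    FeasPt m0 (m, flux m π) ↔ IsKol m0 π m :=
  feasPt_iff

lemma IsKol.mem_simplex (hm0 : m0 ∈ simplex n) {π : Wsp T n} {m : Msp T n} (hπ : InDelta π)
    (hkol : IsKol m0 π m) (s : Fin (T + 1)) : m s ∈ simplex n := by
  induction s using Fin.induction with
  | zero => simpa [funext hkol.1] using hm0
  | succ t ih =>
    refine mem_simplex_of_nonneg_of_sum_eq_one (fun x => ?_) ?_
    · rw [hkol.2 t x]
      exact Finset.sum_nonneg fun y _ => mul_nonneg (ih.1 y).1 ((hπ t y).1 x).1
    · rw [Finset.sum_congr rfl fun x _ => hkol.2 t x, Finset.sum_comm]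
      simp_rw [← Finset.mul_sum, (hπ t _).2, mul_one]
      exact ih.2

lemma FeasP.mem_simplex (hm0 : m0 ∈ simplex n) {p : Msp T n × Wsp T n} (hp : FeasP m0 p)
    (s : Fin (T + 1)) : p.1 s ∈ simplex n :=
  hp.2.mem_simplex hm0 hp.1 s

lemma FeasP.flux_mem_Icc (hm0 : m0 ∈ simplex n) {p : Msp T n × Wsp T n} (hp : FeasP m0 p) :
    (p.1, flux p.1 p.2) ∈ Set.Icc 0 1 := by
  have hm := fun s x => ((hp.mem_simplex hm0 s).1 x)
  have hπ := fun t x y => ((hp.1 t x).1 y)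
  refine ⟨⟨fun s x => (hm s x).1, fun t x y => mul_nonneg (hm _ x).1 (hπ t x y).1⟩,
    ⟨fun s x => (hm s x).2, fun t x y => ?_⟩⟩
  exact mul_le_one₀ (hm _ x).2 (hπ t x y).1 (hπ t x y).2

lemma FeasP.mem_Icc (hm0 : m0 ∈ simplex n) {p : Msp T n × Wsp T n} (hp : FeasP m0 p) :
    p ∈ Set.Icc 0 1 :=
  ⟨⟨fun s x => ((hp.mem_simplex hm0 s).1 x).1, fun t x y => ((hp.1 t x).1 y).1⟩,
    ⟨fun s x => ((hp.mem_simplex hm0 s).1 x).2, fun t x y => ((hp.1 t x).1 y).2⟩⟩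

lemma Jtil_flux {m : Msp T n} (hm : ∀ (t : Fin T) x, 0 ≤ m t.castSucc x) (π : Wsp T n) :
    Jtil ℓ F φ α m (flux m π) = Jpot ℓ F φ α m π := by
  have hpersp : ∀ t x, persp (ℓ t x) (m t.castSucc x) (flux m π t x) =
      (m t.castSucc x : EReal) * ℓ t x (π t x) := fun t x =>
    persp_smul_of_nonneg (hm t x) (π t x)
  simp only [Jtil, Jpot, hpersp]
  rfl

lemma FeasP.Jtil_flux (hm0 : m0 ∈ simplex n) {p : Msp T n × Wsp T n} (hp : FeasP m0 p) :
    Jtil ℓ F φ α p.1 (flux p.1 p.2) = Jpot ℓ F φ α p.1 p.2 :=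
  _root_.Jtil_flux (fun _ x => ((hp.mem_simplex hm0 _).1 x).1) p.2

lemma persp_ne_top_of_Jtil_ne_top (hconv : ConvAssumption ℓ F φ) {m : Msp T n} {w : Wsp T n}
    (h : Jtil ℓ F φ α m w ≠ ⊤) (t : Fin T) (x : Fin n) :
    persp (ℓ t x) (m t.castSucc x) (w t x) ≠ ⊤ := by
  have hpersp : ∀ t x, persp (ℓ t x) (m t.castSucc x) (w t x) ≠ ⊥ := fun t x =>
    persp_ne_bot_s2 (hconv.ell_ne_bot t x) _ _
  have hinner : ∀ t, ∑ x, persp (ℓ t x) (m t.castSucc x) (w t x) ≠ ⊥ := fun t =>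
    EReal.sum_ne_bot fun x _ => hpersp t x
  have hφ : ∑ t, φ t (opA α w t) ≠ ⊥ := EReal.sum_ne_bot fun t _ => hconv.phi_ne_bot t _
  have hF : ∑ s, F s (m s) ≠ ⊥ := EReal.sum_ne_bot fun s _ => hconv.F_ne_bot s _
  have hfirst : ∑ t, ∑ x, persp (ℓ t x) (m t.castSucc x) (w t x) ≠ ⊥ :=
    EReal.sum_ne_bot fun t _ => hinner t
  rw [Jtil, EReal.add_ne_top_iff_ne_top₂ (EReal.add_ne_bot_iff.2 ⟨hfirst, hφ⟩) hF,
    EReal.add_ne_top_iff_ne_top₂ hfirst hφ, EReal.sum_ne_top_iff_of_ne_bot fun t _ => hinner t] at h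
  exact (EReal.sum_ne_top_iff_of_ne_bot fun x _ => hpersp t x).1 (h.1.1 t (mem_univ t)) x
    (mem_univ x)

lemma FeasPt.exists_feasP_flux (hconv : ConvAssumption ℓ F φ) {m : Msp T n} {w : Wsp T n}
    (hp : FeasPt m0 (m, w)) (hfin : Jtil ℓ F φ α m w ≠ ⊤) :
    ∃ π, FeasP m0 (m, π) ∧ w = flux m π := by
  have hcone := fun t x => exists_simplex_smul_of_persp_ne_top (hconv.1 t x).1.1
    (hconv.1 t x).2.2.2 (persp_ne_top_of_Jtil_ne_top hconv hfin t x)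
  choose _ π hπ hw using hcone
  obtain rfl : w = flux m π := funext₂ hw
  exact ⟨π, ⟨hπ, feasPt_flux_iff.1 hp⟩, rfl⟩

end ChangeOfVariables

section Solutions

variable {ℓ : LSp T n} {F : FSp T n} {φ : PhiSp T} {α : ASp T n} {m0 : Fin n → ℝ}

lemma valP_eq_valPt (hm0 : m0 ∈ simplex n) (hconv : ConvAssumption ℓ F φ) :
    valP ℓ F φ α m0 = valPt ℓ F φ α m0 := by
  apply le_antisymm
  · refine le_iInf₂ fun q hq => ?_
    by_cases hfin : Jtil ℓ F φ α q.1 q.2 = ⊤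
    · simp [hfin]
    obtain ⟨π, hp, hw⟩ := FeasPt.exists_feasP_flux (m := q.1) (w := q.2) hconv hq hfin
    calc valP ℓ F φ α m0 ≤ Jpot ℓ F φ α q.1 π := iInf₂_le (q.1, π) hp
      _ = Jtil ℓ F φ α q.1 (flux q.1 π) := (hp.Jtil_flux hm0).symm
      _ = Jtil ℓ F φ α q.1 q.2 := by rw [hw]
  · refine le_iInf₂ fun p hp => ?_
    calc valPt ℓ F φ α m0 ≤ Jtil ℓ F φ α p.1 (flux p.1 p.2) :=
          iInf₂_le (p.1, flux p.1 p.2) (feasPt_flux_iff.2 hp.2)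
      _ = Jpot ℓ F φ α p.1 p.2 := hp.Jtil_flux hm0

lemma isClosed_setOf_feasP : IsClosed {p : Msp T n × Wsp T n | FeasP m0 p} := by
  simp only [FeasP, InDelta, IsKol, Set.ofPred_and, Set.ofPred_forall]
  refine (isClosed_iInter fun t => isClosed_iInter fun x =>
    isClosed_simplex.preimage (by fun_prop)).inter
    ((isClosed_iInter fun x => isClosed_eq (by fun_prop) (by fun_prop)).inter
      (isClosed_iInter fun t => isClosed_iInter fun x => isClosed_eq (by fun_prop) (by fun_prop)))

lemma isCompact_setOf_feasP (hm0 : m0 ∈ simplex n) :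
    IsCompact {p : Msp T n × Wsp T n | FeasP m0 p} :=
  isCompact_Icc.of_isClosed_subset isClosed_setOf_feasP fun _ hp => hp.mem_Icc hm0

lemma lowerSemicontinuousOn_Jpot (hm0 : m0 ∈ simplex n) (hconv : ConvAssumption ℓ F φ) :
    LowerSemicontinuousOn (fun p : Msp T n × Wsp T n => Jpot ℓ F φ α p.1 p.2)
      {p | FeasP m0 p} := by
  set K := {p : Msp T n × Wsp T n | FeasP m0 p}
  have hcost : ∀ t x, LowerSemicontinuousOn
      (fun p : Msp T n × Wsp T n => (p.1 t.castSucc x : EReal) * ℓ t x (p.2 t x)) K :=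
    fun t x => .coe_mul_of_nonneg (by fun_prop) (fun p hp => ((hp.mem_simplex hm0 _).1 x).1)
      (((hconv.1 t x).2.2.1.comp (by fun_prop)).lowerSemicontinuousOn _)
      (fun _ _ => hconv.ell_ne_bot t x _)
  have hcost_ne_bot : ∀ t x, ∀ p ∈ K, (p.1 t.castSucc x : EReal) * ℓ t x (p.2 t x) ≠ ⊥ :=
    fun t x p hp => EReal.coe_mul_ne_bot ((hp.mem_simplex hm0 _).1 x).1 (hconv.ell_ne_bot t x _)
  have hcoupling : ∀ t, LowerSemicontinuousOn
      (fun p : Msp T n × Wsp T n => φ t (Qcpl α p.1 p.2 t)) K :=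
    fun t => ((hconv.2.2 t).2.2.comp (by unfold Qcpl; fun_prop)).lowerSemicontinuousOn _
  have hterminal : ∀ s, LowerSemicontinuousOn (fun p : Msp T n × Wsp T n => F s (p.1 s)) K :=
    fun s => ((hconv.2.1 s).2.2.comp (by fun_prop)).lowerSemicontinuousOn _
  have hcosts_ne_bot : ∀ p ∈ K,
      ∑ t, ∑ x, (p.1 t.castSucc x : EReal) * ℓ t x (p.2 t x) ≠ ⊥ := fun p hp =>
    EReal.sum_ne_bot fun t _ => EReal.sum_ne_bot fun x _ => hcost_ne_bot t x p hp
  have hcoupling_ne_bot : ∀ p : Msp T n × Wsp T n, ∑ t, φ t (Qcpl α p.1 p.2 t) ≠ ⊥ := fun _ =>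
    EReal.sum_ne_bot fun t _ => hconv.phi_ne_bot t _
  have hcosts := LowerSemicontinuousOn.finset_sum_of_ne_bot univ
    (fun t _ => .finset_sum_of_ne_bot univ (fun x _ => hcost t x) fun x _ => hcost_ne_bot t x)
    fun t _ p hp => EReal.sum_ne_bot fun x _ => hcost_ne_bot t x p hp
  exact (hcosts.add_of_ne_bot
    (.finset_sum_of_ne_bot univ (fun t _ => hcoupling t) fun t _ _ _ => hconv.phi_ne_bot t _)
    hcosts_ne_bot fun p _ => hcoupling_ne_bot p).add_of_ne_bot
    (.finset_sum_of_ne_bot univ (fun s _ => hterminal s) fun s _ _ _ => hconv.F_ne_bot s _)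
    (fun p hp => EReal.add_ne_bot_iff.2 ⟨hcosts_ne_bot p hp, hcoupling_ne_bot p⟩)
    fun _ _ => EReal.sum_ne_bot fun s _ => hconv.F_ne_bot s _

lemma exists_isSolP (hm0 : m0 ∈ simplex n) (hconv : ConvAssumption ℓ F φ)
    (hne : {p : Msp T n × Wsp T n | FeasP m0 p}.Nonempty) : ∃ p, IsSolP ℓ F φ α m0 p := by
  obtain ⟨p, hp, hmin⟩ :=
    (lowerSemicontinuousOn_Jpot hm0 hconv).exists_isMinOn hne (isCompact_setOf_feasP hm0)
  exact ⟨p, hp, fun q hq => isMinOn_iff.1 hmin q hq⟩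

lemma IsSolP.isSolPt_flux (hm0 : m0 ∈ simplex n) (hconv : ConvAssumption ℓ F φ)
    {p : Msp T n × Wsp T n} (hp : IsSolP ℓ F φ α m0 p) :
    IsSolPt ℓ F φ α m0 (p.1, flux p.1 p.2) := by
  refine ⟨feasPt_flux_iff.2 hp.1.2, fun q hq => ?_⟩
  calc Jtil ℓ F φ α p.1 (flux p.1 p.2) = Jpot ℓ F φ α p.1 p.2 := hp.1.Jtil_flux hm0
    _ ≤ valP ℓ F φ α m0 := le_iInf₂ hp.2
    _ = valPt ℓ F φ α m0 := valP_eq_valPt hm0 hconv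
    _ ≤ Jtil ℓ F φ α q.1 q.2 := iInf₂_le q hq

lemma isBounded_setOf_isSolPt (hm0 : m0 ∈ simplex n) (hconv : ConvAssumption ℓ F φ)
    {p₀ : Msp T n × Wsp T n} (hp₀ : FeasP m0 p₀) (hfin : Jpot ℓ F φ α p₀.1 p₀.2 ≠ ⊤) :
    IsBounded {q : Msp T n × Wsp T n | IsSolPt ℓ F φ α m0 q} := by
  refine (Metric.isBounded_Icc 0 1).subset fun q hq => ?_
  have hqfin : Jtil ℓ F φ α q.1 q.2 ≠ ⊤ :=
    ne_top_of_le_ne_top (by rwa [hp₀.Jtil_flux hm0]) (hq.2 _ (feasPt_flux_iff.2 hp₀.2))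
  obtain ⟨π, hπ, hw⟩ := FeasPt.exists_feasP_flux (m := q.1) (w := q.2) hconv hq.1 hqfin
  simpa [← hw] using hπ.flux_mem_Icc hm0

end Solutions

theorem valP_eq_valPt_and_solutions_general {T n : ℕ}
    (ℓ : LSp T n) (F : FSp T n) (φ : PhiSp T) (α : ASp T n)
    (m0 : Fin n → ℝ) (hm0 : m0 ∈ simplex n)
    (hconv : ConvAssumption ℓ F φ) :
    valP ℓ F φ α m0 = valPt ℓ F φ α m0 ∧
    ((∃ p : Msp T n × Wsp T n, FeasP m0 p ∧ Jpot ℓ F φ α p.1 p.2 ≠ ⊤) →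
      ({p : Msp T n × Wsp T n | IsSolP ℓ F φ α m0 p}.Nonempty ∧
       IsBounded {p : Msp T n × Wsp T n | IsSolP ℓ F φ α m0 p} ∧
       {p : Msp T n × Wsp T n | IsSolPt ℓ F φ α m0 p}.Nonempty ∧
       IsBounded {p : Msp T n × Wsp T n | IsSolPt ℓ F φ α m0 p})) := by
  refine ⟨valP_eq_valPt hm0 hconv, fun ⟨p₀, hp₀, hfin⟩ => ?_⟩
  obtain ⟨p, hp⟩ := exists_isSolP hm0 hconv ⟨p₀, hp₀⟩
  exact ⟨⟨p, hp⟩, (Metric.isBounded_Icc 0 1).subset fun q hq => hq.1.mem_Icc hm0,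
    ⟨_, hp.isSolPt_flux hm0 hconv⟩, isBounded_setOf_isSolPt hm0 hconv hp₀ hfin⟩

/-- Lemma 3: `val(P) = val(P̃)`; if (P) is feasible then both
(P) and (P̃) have a nonempty bounded set of solutions. -/
theorem valP_eq_valPt_and_solutions {T n : ℕ} (hT : 1 ≤ T) (hn : 1 ≤ n)
    (ℓ : LSp T n) (F : FSp T n) (φ : PhiSp T) (α : ASp T n)
    (m0 : Fin n → ℝ) (hm0 : m0 ∈ simplex n)
    (hconv : ConvAssumption ℓ F φ) :
    valP ℓ F φ α m0 = valPt ℓ F φ α m0 ∧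
    ((∃ p : Msp T n × Wsp T n, FeasP m0 p ∧ Jpot ℓ F φ α p.1 p.2 ≠ ⊤) →
      ({p : Msp T n × Wsp T n | IsSolP ℓ F φ α m0 p}.Nonempty ∧
       IsBounded {p : Msp T n × Wsp T n | IsSolP ℓ F φ α m0 p} ∧
       {p : Msp T n × Wsp T n | IsSolPt ℓ F φ α m0 p}.Nonempty ∧
       IsBounded {p : Msp T n × Wsp T n | IsSolPt ℓ F φ α m0 p})) :=
  valP_eq_valPt_and_solutions_general ℓ F φ α m0 hm0 hconv

end
end

section
/- Under the convexity and qualification assumptions, 0 belongs to the interior of the set dom(𝓖) − 𝓐(dom(𝓕)) ⊆ ℝ(𝒯̄×S)×ℝ(𝒯̄×S)×ℝ(𝒯). -/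
noncomputable section
open Finset Filter Topology Bornology
open scoped Classical Pointwise

variable {T n : ℕ}

lemma sum_ne_top' {ι : Type*} {s : Finset ι} {f : ι → EReal} (h : ∀ i ∈ s, f i ≠ ⊤) :
    ∑ i ∈ s, f i ≠ ⊤ := by
  classical
  induction s using Finset.cons_induction with
  | empty => simp
  | cons a s ha ih =>
    rw [Finset.sum_cons]
    exact (EReal.add_lt_top (h a (Finset.mem_cons_self a s))
      (ih fun i hi => h i (Finset.mem_cons_of_mem hi))).ne

/-- under the convexity and qualification assumptions,
`0 ∈ int (dom 𝓖 − 𝓐(dom 𝓕))`. -/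
theorem qualification_interior_condition {T n : ℕ} (hT : 1 ≤ T) (hn : 1 ≤ n)
    (ℓ : LSp T n) (F : FSp T n) (φ : PhiSp T) (α : ASp T n)
    (m0 : Fin n → ℝ) (hm0 : m0 ∈ simplex n)
    (hconv : ConvAssumption ℓ F φ) (hqual : Qualif ℓ F φ α m0) :
    (0 : Ksp T n) ∈
      interior ({k : Ksp T n | Gobj m0 k ≠ ⊤} -
        Aop α '' {c : Csp T n | Fobj ℓ F φ c ≠ ⊤}) := by
  classical
  obtain ⟨α0, hα0, hq⟩ := hqual
  set N : ℝ := (((T + 1) * n + (T + 1) * n + T : ℕ) : ℝ) with hN_def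
  have hN0 : (0 : ℝ) ≤ N := Nat.cast_nonneg _
  set r : ℝ := α0 / (N + 1) with hr_def
  have hr : 0 < r := div_pos hα0 (by linarith)
  rw [mem_interior]
  refine ⟨Metric.ball 0 r, ?_, Metric.isOpen_ball, Metric.mem_ball_self hr⟩
  rintro ⟨ε1, ε2, ε3⟩ hε
  have hd : dist ((ε1, ε2, ε3) : Ksp T n) 0 < r := Metric.mem_ball.mp hε
  have hmax : dist ε1 (0 : Msp T n) < r ∧ dist ε2 (0 : Msp T n) < r ∧
      dist ε3 (0 : Psp T) < r := by
    rw [show ((0 : Ksp T n)) = ((0, 0, 0) : Ksp T n) from rfl, Prod.dist_eq, Prod.dist_eq,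
      max_lt_iff, max_lt_iff] at hd
    exact ⟨hd.1, hd.2⟩
  have hb1 : ∀ s x, |ε1 s x| ≤ r := by
    intro s x
    have h1 : dist (ε1 s x) ((0 : Msp T n) s x) ≤ dist ε1 (0 : Msp T n) :=
      (dist_le_pi_dist (ε1 s) ((0 : Msp T n) s) x).trans (dist_le_pi_dist ε1 0 s)
    have := h1.trans hmax.1.le
    simpa [Real.dist_eq] using this
  have hb2 : ∀ s x, |ε2 s x| ≤ r := by
    intro s x
    have h1 : dist (ε2 s x) ((0 : Msp T n) s x) ≤ dist ε2 (0 : Msp T n) :=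
      (dist_le_pi_dist (ε2 s) ((0 : Msp T n) s) x).trans (dist_le_pi_dist ε2 0 s)
    have := h1.trans hmax.2.1.le
    simpa [Real.dist_eq] using this
  have hb3 : ∀ t, |ε3 t| ≤ r := by
    intro t
    have h1 : dist (ε3 t) ((0 : Psp T) t) ≤ dist ε3 (0 : Psp T) :=
      dist_le_pi_dist ε3 0 t
    have := h1.trans hmax.2.2.le
    simpa [Real.dist_eq] using this
  -- the perturbation fed to the qualification assumption
  set e1q : Msp T n := fun s x => if s = 0 then ε1 s x else -ε1 s x with he1q
  have hqn : qnorm e1q ε2 ε3 ≤ α0 := by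
    have hsq1 : ∀ s x, (e1q s x) ^ 2 ≤ r ^ 2 := by
      intro s x
      have heq : (e1q s x) ^ 2 = (ε1 s x) ^ 2 := by
        simp only [he1q]; split_ifs <;> ring
      rw [heq]
      have h := abs_le.mp (hb1 s x)
      nlinarith [h.1, h.2]
    have hsq2 : ∀ s x, (ε2 s x) ^ 2 ≤ r ^ 2 := by
      intro s x; have h := abs_le.mp (hb2 s x); nlinarith [h.1, h.2]
    have hsq3 : ∀ t, (ε3 t) ^ 2 ≤ r ^ 2 := by
      intro t; have h := abs_le.mp (hb3 t); nlinarith [h.1, h.2]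
    have A1 : ∑ s, ∑ x, e1q s x ^ 2 ≤ (((T + 1) * n : ℕ) : ℝ) * r ^ 2 := by
      calc ∑ s, ∑ x, e1q s x ^ 2 ≤ ∑ _s : Fin (T + 1), ∑ _x : Fin n, r ^ 2 :=
            Finset.sum_le_sum fun s _ => Finset.sum_le_sum fun x _ => hsq1 s x
        _ = (((T + 1) * n : ℕ) : ℝ) * r ^ 2 := by
            simp [Finset.sum_const, Finset.card_univ]; push_cast; ring
    have A2 : ∑ s, ∑ x, ε2 s x ^ 2 ≤ (((T + 1) * n : ℕ) : ℝ) * r ^ 2 := by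
      calc ∑ s, ∑ x, ε2 s x ^ 2 ≤ ∑ _s : Fin (T + 1), ∑ _x : Fin n, r ^ 2 :=
            Finset.sum_le_sum fun s _ => Finset.sum_le_sum fun x _ => hsq2 s x
        _ = (((T + 1) * n : ℕ) : ℝ) * r ^ 2 := by
            simp [Finset.sum_const, Finset.card_univ]; push_cast; ring
    have A3 : ∑ t, ε3 t ^ 2 ≤ ((T : ℕ) : ℝ) * r ^ 2 := by
      calc ∑ t, ε3 t ^ 2 ≤ ∑ _t : Fin T, r ^ 2 :=
            Finset.sum_le_sum fun t _ => hsq3 t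
        _ = ((T : ℕ) : ℝ) * r ^ 2 := by
            simp [Finset.sum_const, Finset.card_univ]
    have htot : (∑ s, ∑ x, e1q s x ^ 2) + (∑ s, ∑ x, ε2 s x ^ 2) + ∑ t, ε3 t ^ 2 ≤
        ((N + 1) * r) ^ 2 := by
      have hNsum : (((T + 1) * n : ℕ) : ℝ) + (((T + 1) * n : ℕ) : ℝ) + ((T : ℕ) : ℝ) = N := by
        rw [hN_def]; push_cast; ring
      have h1 : (∑ s, ∑ x, e1q s x ^ 2) + (∑ s, ∑ x, ε2 s x ^ 2) + ∑ t, ε3 t ^ 2 ≤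
          N * r ^ 2 := by rw [← hNsum]; linarith
      have h2 : N * r ^ 2 ≤ ((N + 1) * r) ^ 2 := by nlinarith [sq_nonneg r, hr.le]
      linarith
    have hNr : (N + 1) * r = α0 := by
      rw [hr_def]; field_simp
    calc qnorm e1q ε2 ε3 ≤ Real.sqrt (((N + 1) * r) ^ 2) := Real.sqrt_le_sqrt htot
      _ = (N + 1) * r := Real.sqrt_sq (by positivity)
      _ = α0 := hNr
  obtain ⟨π, hπ, m1, hKol, hpos, hF, hφ⟩ := hq e1q ε2 ε3 hqn
  refine Set.mem_sub.mpr ⟨(fun s x => -(mbar0 m0 s x), 0, 0), ?_,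
    Aop α (m1, fun t x y => m1 t.castSucc x * π t x y,
      fun s x => m1 s x + ε2 s x, fun t => Qcpl α m1 π t + ε3 t),
    ⟨(m1, fun t x y => m1 t.castSucc x * π t x y,
      fun s x => m1 s x + ε2 s x, fun t => Qcpl α m1 π t + ε3 t), ?_, rfl⟩, ?_⟩
  · -- Gobj finite
    rw [Set.mem_setOf_eq, Gobj, if_pos ⟨fun s x => rfl, rfl, rfl⟩]
    simp
  · -- Fobj finite
    rw [Set.mem_setOf_eq, Fobj]
    refine (EReal.add_lt_top (EReal.add_lt_top ?_ ?_).ne ?_).ne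
    · refine sum_ne_top' fun t _ => sum_ne_top' fun x _ => ?_
      rcases eq_or_lt_of_le (hpos t.castSucc x) with h0 | hp
      · -- mass zero
        have hw0 : (fun y => m1 t.castSucc x * π t x y) = (0 : Fin n → ℝ) := by
          funext y; simp [← h0]
        show persp (ℓ t x) (m1 t.castSucc x) (fun y => m1 t.castSucc x * π t x y) ≠ ⊤
        rw [persp, hw0, ← h0, if_neg (lt_irrefl 0), if_pos ⟨rfl, rfl⟩]
        simp
      · -- positive mass
        have hne : m1 t.castSucc x ≠ 0 := ne_of_gt hp
        have hsm : (m1 t.castSucc x)⁻¹ • (fun y => m1 t.castSucc x * π t x y) = π t x := by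
          funext y
          simp only [Pi.smul_apply, smul_eq_mul]
          field_simp
        show persp (ℓ t x) (m1 t.castSucc x) (fun y => m1 t.castSucc x * π t x y) ≠ ⊤
        rw [persp, if_pos hp, hsm, ← EReal.coe_toReal (hπ t x) ((hconv.1 t x).1.2 (π t x)),
          ← EReal.coe_mul]
        exact EReal.coe_ne_top _
    · exact sum_ne_top' fun t _ => hφ t
    · exact sum_ne_top' fun s _ => hF s
  · -- the difference equals (ε1, ε2, ε3)
    refine Prod.ext ?_ (Prod.ext ?_ ?_)
    · funext s x
      show -(mbar0 m0 s x) -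
        (opS (fun t x y => m1 t.castSucc x * π t x y) s x - m1 s x) = ε1 s x
      by_cases hs0 : (s : ℕ) = 0
      · have hs : s = 0 := Fin.ext hs0
        subst hs
        rw [opS, dif_pos (Fin.val_zero (T+1))]
        have h1 := hKol.1 x
        have h2 : e1q 0 x = ε1 0 x := if_pos rfl
        rw [h2] at h1
        have h3 : mbar0 m0 (0 : Fin (T + 1)) x = m0 x := if_pos rfl
        rw [h3] at h1 ⊢
        linarith
      · have hs : s ≠ 0 := fun h => hs0 (by rw [h]; rfl)
        set t : Fin T := ⟨(s : ℕ) - 1, by have := s.isLt; omega⟩ with ht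
        have hts : t.succ = s := by
          apply Fin.ext; simp [Fin.val_succ, ht]; omega
        rw [opS, dif_neg hs0]
        have hK := hKol.2 t x
        rw [hts] at hK
        have he : e1q s x = -ε1 s x := if_neg hs
        rw [he] at hK
        have hmb : mbar0 m0 s x = 0 := if_neg hs
        rw [hmb]
        have hsum : ∑ y, m1 (⟨(s : ℕ) - 1, by have := s.isLt; omega⟩ : Fin T).castSucc y *
            π ⟨(s : ℕ) - 1, by have := s.isLt; omega⟩ y x
            = ∑ y, m1 t.castSucc y * π t y x := rfl
        rw [hsum]
        linarith
    · funext s x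
      show (0 : ℝ) - (m1 s x - (m1 s x + ε2 s x)) = ε2 s x
      ring
    · funext t
      show (0 : ℝ) - (opA α (fun t x y => m1 t.castSucc x * π t x y) t -
        (Qcpl α m1 π t + ε3 t)) = ε3 t
      have : opA α (fun t x y => m1 t.castSucc x * π t x y) t = Qcpl α m1 π t := rfl
      rw [this]
      ring

end
end

section
/- Comparison principle: under the convexity assumption, let (u,γ,P) satisfy u(t,x) + ℓ*(t,x,−(A*[P]+S*[u])(t,x,·)) ≤ γ(t,x) for all (t,x) ∈ 𝒯×S and u(T,·) = γ(T,·), and let û = U[γ,P]. Then û(t,x) ≥ u(t,x) for all (t,x) ∈ 𝒯̄×S. -/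
noncomputable section
open Finset Filter Topology Bornology
open scoped Classical Pointwise

variable {T n : ℕ}

/-! Backward induction in time. The terminal values agree. Since `dom ℓ(t,x,·) ⊆ Δ(S)` consists
of nonnegative vectors, the conjugate `ℓ*(t,x,-(A*[P] + S*[u]))` is antitone in the continuation
value `u(t+1,·)`; so `û(t+1,·) ≥ u(t+1,·)` makes the cost for `û` the smaller one, and
`u(t,x) + cost(u) ≤ γ(t,x) = û(t,x) + cost(û)` gives `u(t,x) ≤ û(t,x)`, the cost for `û` being
finite because `γ` is. -/

lemma conjFn_monotone {d : Type*} [Fintype d] {g : (d → ℝ) → EReal}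
    (hdom : ∀ ρ, g ρ ≠ ⊤ → 0 ≤ ρ) : Monotone (conjFn g) := by
  intro y y' hy
  refine iSup_le fun x => le_iSup_of_le x ?_
  by_cases hg : g x = ⊤
  · simp [hg]
  · have hsum : ∑ i, x i * y i ≤ ∑ i, x i * y' i :=
      sum_le_sum fun i _ => mul_le_mul_of_nonneg_left (hy i) (hdom x hg i)
    exact EReal.sub_le_sub (EReal.coe_le_coe_iff.mpr hsum) le_rfl

lemma dpCost_anti {ℓ : LSp T n} {α : ASp T n} {u u' : Msp T n} (P : Psp T) {t : Fin T}
    {x : Fin n} (hdom : ∀ ρ, ℓ t x ρ ≠ ⊤ → 0 ≤ ρ) (h : ∀ y, u t.succ y ≤ u' t.succ y) :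
    dpCost ℓ α u' P t x ≤ dpCost ℓ α u P t x :=
  conjFn_monotone hdom fun y => neg_le_neg (add_le_add_right (h y) _)

lemma EReal.le_of_add_le_of_add_eq {a b g : ℝ} {c c' : EReal} (hc : c' ≤ c)
    (ha : (a : EReal) + c ≤ g) (hb : (b : EReal) + c' = g) : a ≤ b := by
  induction c' using EReal.rec with
  | bot => simp at hb
  | top => simp at hb
  | coe r =>
    have hab : ((a + r : ℝ) : EReal) ≤ ((b + r : ℝ) : EReal) := by
      push_cast
      rw [hb]
      exact (add_le_add_right hc _).trans ha
    linarith [EReal.coe_le_coe_iff.mp hab]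

theorem comparison_principle_general {T n : ℕ}
    (ℓ : LSp T n) (α : ASp T n)
    (hconv : ∀ t x, EProper (ℓ t x) ∧ EConvexOn (ℓ t x) ∧
      LowerSemicontinuous (ℓ t x) ∧ ∀ ρ, ℓ t x ρ ≠ ⊤ → ρ ∈ simplex n)
    (u γ : Msp T n) (P : Psp T)
    (hfeas : FeasD ℓ α (u, γ, P))
    (uh : Msp T n) (hdp : IsDP ℓ α γ P uh) :
    ∀ (s : Fin (T + 1)) (x : Fin n), u s x ≤ uh s x := by
  intro s
  induction s using Fin.reverseInduction with
  | last => exact fun x => (hfeas.2 x).trans_le (hdp.2 x).symm.le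
  | cast t ih =>
    intro x
    have hnonneg : ∀ ρ, ℓ t x ρ ≠ ⊤ → 0 ≤ ρ := fun ρ hρ y => ((hconv t x).2.2.2 ρ hρ).1 y |>.1
    exact EReal.le_of_add_le_of_add_eq (dpCost_anti P hnonneg ih) (hfeas.1 t x) (hdp.1 t x)

/-- comparison principle for the dynamic programming equation:
if `(u,γ,P)` satisfies the dual constraints (with inequalities) and
`û = U[γ,P]`, then `û ≥ u`. -/
theorem comparison_principle {T n : ℕ} (hT : 1 ≤ T) (hn : 1 ≤ n)
    (ℓ : LSp T n) (α : ASp T n)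
    (hconv : ∀ t x, EProper (ℓ t x) ∧ EConvexOn (ℓ t x) ∧
      LowerSemicontinuous (ℓ t x) ∧ ∀ ρ, ℓ t x ρ ≠ ⊤ → ρ ∈ simplex n)
    (u γ : Msp T n) (P : Psp T)
    (hfeas : FeasD ℓ α (u, γ, P))
    (uh : Msp T n) (hdp : IsDP ℓ α γ P uh) :
    ∀ (s : Fin (T + 1)) (x : Fin n), u s x ≤ uh s x :=
  comparison_principle_general ℓ α hconv u γ P hfeas uh hdp

end
end

section
/- Under the convexity and qualification assumptions, problems (D) and (D̃) have the same value. Moreover, for any solution (u,γ,P) of (D), the pair (γ,P) is a solution of (D̃); problem (D̃) admits at least one solution; and conversely, for any solution (γ,P) of (D̃), the triple (U[γ,P],γ,P) is a solution of (D). -/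
noncomputable section
open Finset Filter Topology Bornology
open scoped Classical Pointwise

variable {T n : ℕ}

/-!
Since `dom ℓ(t,x,·)` lies in the compact simplex, `ℓ*(t,x,·)` is finite, monotone and
1-Lipschitz. Hence `U[γ,P]` is well defined, depends continuously on `(γ,P)`, and dominates
(by backward induction) every `u` for which `(u,γ,P)` is feasible for (D). As `m₀ ≥ 0`,
replacing `u` by `U[γ,P]` can only increase the objective; this gives the equality of the
values and the transfer of solutions in both directions.

For existence, `D̃` is upper semicontinuous because the conjugates of `F` and `φ` are lower
semicontinuous. Pairing a feasible triple with the flow `(π, m₁)` given by the qualification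
assumption for a perturbation `(0, ε₂, ε₃)` yields the weak duality bound
`𝓓(u,γ,P) ≤ C_ε − ⟨ε₂,γ⟩ − ⟨ε₃,P⟩`; perturbing along `±α₀` times each coordinate bounds every
coordinate of `(γ,P)` on a superlevel set of `D̃`. So these superlevel sets are compact, and
`D̃` attains its supremum.
-/

lemma EReal.coe_sub_toReal_le (a : ℝ) {b : EReal} (hb : b ≠ ⊤) :
    ((a - b.toReal : ℝ) : EReal) ≤ a - b := by
  induction b with
  | bot => simp
  | coe r => simp
  | top => exact absurd rfl hb

lemma EReal.coe_finset_sum {ι : Type*} (s : Finset ι) (f : ι → ℝ) :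
    ((∑ i ∈ s, f i : ℝ) : EReal) = ∑ i ∈ s, (f i : EReal) :=
  map_sum (⟨⟨((↑) : ℝ → EReal), EReal.coe_zero⟩, EReal.coe_add⟩ : ℝ →+ EReal) f s

lemma EReal.finset_sum_ne_bot {ι : Type*} {s : Finset ι} {f : ι → EReal}
    (h : ∀ i ∈ s, f i ≠ ⊥) : ∑ i ∈ s, f i ≠ ⊥ := by
  induction s using Finset.cons_induction with
  | empty => simp
  | cons a s ha ih =>
    rw [sum_cons]
    exact EReal.add_ne_bot_iff.2 ⟨h a (mem_cons_self a s), ih fun i hi => h i (mem_cons_of_mem hi)⟩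

lemma abs_le_div_of_abs_mul_le {a z C : ℝ} (ha : 0 < a) (h : |a * z| ≤ C) : |z| ≤ C / a := by
  rwa [le_div_iff₀ ha, ← abs_of_pos ha, ← abs_mul, mul_comm]

lemma iSup_coe_sub_ne_bot {ι : Type*} {f : ι → ℝ} {c : ι → EReal} {i : ι} (hi : c i ≠ ⊤) :
    ⨆ j, (f j : EReal) - c j ≠ ⊥ :=
  ne_bot_of_le_ne_bot (EReal.add_ne_bot_iff.2 ⟨EReal.coe_ne_bot _, by simpa using hi⟩)
    (le_iSup (fun j => (f j : EReal) - c j) i)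

section Semicontinuity

variable {X : Type*} [TopologicalSpace X]

lemma lowerSemicontinuous_iSup_coe_sub {ι : Type*} {f : ι → X → ℝ}
    (hf : ∀ i, Continuous (f i)) (c : ι → EReal) :
    LowerSemicontinuous fun y => ⨆ i, (f i y : EReal) - c i := by
  refine lowerSemicontinuous_iSup fun i => ?_
  induction c i with
  | bot => simpa using lowerSemicontinuous_const
  | coe r =>
    simp_rw [← EReal.coe_sub]
    exact (continuous_coe_real_ereal.comp ((hf i).sub continuous_const)).lowerSemicontinuous
  | top => simpa using lowerSemicontinuous_const

lemma lowerSemicontinuous_finset_sum_of_ne_bot {ι : Type*} {s : Finset ι} {f : ι → X → EReal}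
    (hf : ∀ i ∈ s, LowerSemicontinuous (f i)) (hb : ∀ i ∈ s, ∀ x, f i x ≠ ⊥) :
    LowerSemicontinuous fun x => ∑ i ∈ s, f i x := by
  induction s using Finset.cons_induction with
  | empty => simpa using lowerSemicontinuous_const
  | cons a s ha ih =>
    simp only [sum_cons]
    refine (hf a (mem_cons_self a s)).add'
      (ih (fun i hi => hf i (mem_cons_of_mem hi)) fun i hi => hb i (mem_cons_of_mem hi))
      fun x => EReal.continuousAt_add (Or.inr ?_) (Or.inl (hb a (mem_cons_self a s) x))
    exact EReal.finset_sum_ne_bot fun i hi => hb i (mem_cons_of_mem hi) x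

lemma UpperSemicontinuous.sub_lowerSemicontinuous {f g : X → EReal}
    (hf : UpperSemicontinuous f) (hg : LowerSemicontinuous g) (hf' : ∀ x, f x ≠ ⊤)
    (hg' : ∀ x, g x ≠ ⊥) : UpperSemicontinuous fun x => f x - g x :=
  hf.add' (continuous_neg.comp_lowerSemicontinuous_antitone hg fun _ _ => EReal.neg_le_neg_iff.2)
    fun x => EReal.continuousAt_add (Or.inl (hf' x)) (Or.inr (by simpa using hg' x))

lemma UpperSemicontinuous.exists_forall_le_of_isCompact_superlevel {f : X → EReal} [Nonempty X]
    (hf : UpperSemicontinuous f) (hK : ∀ c : ℝ, IsCompact {x | (c : EReal) ≤ f x}) :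
    ∃ x, ∀ y, f y ≤ f x := by
  rcases em (∃ x₀, f x₀ ≠ ⊥) with ⟨x₀, hx₀⟩ | hbot
  · obtain ⟨c, -, hc⟩ := EReal.lt_iff_exists_real_btwn.1 (bot_lt_iff_ne_bot.2 hx₀)
    obtain ⟨x, -, hmax⟩ := (hf.upperSemicontinuousOn _).exists_isMaxOn ⟨x₀, hc.le⟩ (hK c)
    refine ⟨x, fun y => ?_⟩
    by_cases hy : (c : EReal) ≤ f y
    · exact hmax hy
    · exact (not_le.1 hy).le.trans (hc.le.trans (hmax hc.le))
  · exact ⟨Classical.arbitrary X, fun y => by simp_all⟩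

end Semicontinuity

section FenchelConjugate

variable {d : Type*} [Fintype d] {g : (d → ℝ) → EReal}

lemma coe_sub_toReal_le_conjFn {x : d → ℝ} (hx : g x ≠ ⊤) (y : d → ℝ) :
    ((∑ i, x i * y i - (g x).toReal : ℝ) : EReal) ≤ conjFn g y :=
  (EReal.coe_sub_toReal_le _ hx).trans (le_iSup (fun x => (↑(∑ i, x i * y i) : EReal) - g x) x)

lemma conjFn_le_coe (hg : ∀ x, g x ≠ ⊥) {y : d → ℝ} {c : ℝ}
    (h : ∀ x, g x ≠ ⊤ → ∑ i, x i * y i - (g x).toReal ≤ c) : conjFn g y ≤ c := by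
  refine iSup_le fun x => ?_
  by_cases hx : g x = ⊤
  · simp [hx]
  · rw [← EReal.coe_toReal hx (hg x)]
    exact_mod_cast h x hx

lemma conjFn_ne_bot (hg : EProper g) (y : d → ℝ) : conjFn g y ≠ ⊥ :=
  iSup_coe_sub_ne_bot hg.1.choose_spec

lemma lowerSemicontinuous_conjFn : LowerSemicontinuous (conjFn g) :=
  lowerSemicontinuous_iSup_coe_sub (fun x => by fun_prop) g

end FenchelConjugate

lemma coe_sub_toReal_le_conjR {g : ℝ → EReal} {x : ℝ} (hx : g x ≠ ⊤) (y : ℝ) :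
    ((x * y - (g x).toReal : ℝ) : EReal) ≤ conjR g y :=
  (EReal.coe_sub_toReal_le _ hx).trans (le_iSup (fun x => (↑(x * y) : EReal) - g x) x)

lemma conjR_ne_bot {g : ℝ → EReal} (hg : EProper g) (y : ℝ) : conjR g y ≠ ⊥ :=
  iSup_coe_sub_ne_bot hg.1.choose_spec

lemma lowerSemicontinuous_conjR {g : ℝ → EReal} : LowerSemicontinuous (conjR g) :=
  lowerSemicontinuous_iSup_coe_sub (fun x => by fun_prop) g
lemma isCompact_simplex (n : ℕ) : IsCompact (simplex n) := by
  refine (isCompact_univ_pi fun _ => isCompact_Icc).of_isClosed_subset ?_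
    fun ρ hρ => Set.mem_univ_pi.2 hρ.1
  have : simplex n = (Set.univ.pi fun _ => Set.Icc 0 1) ∩ {ρ | ∑ y, ρ y = 1} := by
    ext ρ; simp only [simplex, Set.mem_inter_iff, Set.mem_univ_pi, Set.mem_ofPred_eq]
  rw [this]
  exact (isClosed_set_pi fun _ _ => isClosed_Icc).inter (isClosed_eq (by fun_prop) continuous_const)

lemma sum_mul_le_sum_mul_add_dist {n : ℕ} {ρ : Fin n → ℝ} (hρ : ρ ∈ simplex n)
    (a b : Fin n → ℝ) : ∑ i, ρ i * a i ≤ ∑ i, ρ i * b i + dist a b := by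
  calc ∑ i, ρ i * a i ≤ ∑ i, ρ i * (b i + dist a b) := by
        refine sum_le_sum fun i _ => mul_le_mul_of_nonneg_left ?_ (hρ.1 i).1
        have := dist_le_pi_dist a b i
        rw [Real.dist_eq] at this
        linarith [le_abs_self (a i - b i)]
    _ = ∑ i, ρ i * b i + dist a b := by simp [mul_add, sum_add_distrib, ← sum_mul, hρ.2]

section ConjugateOnSimplex

variable {n : ℕ} {g : (Fin n → ℝ) → EReal}

lemma conjFn_mono (hdom : ∀ ρ, g ρ ≠ ⊤ → ρ ∈ simplex n) {a b : Fin n → ℝ} (h : a ≤ b) :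
    conjFn g a ≤ conjFn g b := by
  refine iSup_mono fun x => ?_
  by_cases hx : g x = ⊤
  · simp [hx]
  · exact EReal.sub_le_sub (EReal.coe_le_coe_iff.2 (sum_le_sum fun i _ =>
      mul_le_mul_of_nonneg_left (h i) ((hdom x hx).1 i).1)) le_rfl

lemma conjFn_ne_top (hg : EProper g) (hl : LowerSemicontinuous g)
    (hdom : ∀ ρ, g ρ ≠ ⊤ → ρ ∈ simplex n) (y : Fin n → ℝ) : conjFn g y ≠ ⊤ := by
  obtain ⟨x₀, hx₀⟩ := hg.1
  obtain ⟨ρ, -, hmin⟩ :=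
    (hl.lowerSemicontinuousOn _).exists_isMinOn ⟨x₀, hdom x₀ hx₀⟩ (isCompact_simplex n)
  refine ne_top_of_le_ne_top (EReal.coe_ne_top (‖y‖ - (g ρ).toReal))
    (conjFn_le_coe hg.2 fun x hx => ?_)
  have hρ : (g ρ).toReal ≤ (g x).toReal :=
    EReal.toReal_le_toReal (hmin (hdom x hx)) (hg.2 ρ) hx
  have := sum_mul_le_sum_mul_add_dist (hdom x hx) y 0
  simp only [Pi.zero_apply, mul_zero, sum_const_zero, zero_add, dist_zero_right] at this
  linarith

lemma lipschitzWith_conjFn_toReal (hg : EProper g) (hl : LowerSemicontinuous g)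
    (hdom : ∀ ρ, g ρ ≠ ⊤ → ρ ∈ simplex n) : LipschitzWith 1 fun y => (conjFn g y).toReal := by
  refine LipschitzWith.of_le_add fun a b => ?_
  have hb := EReal.coe_toReal (conjFn_ne_top hg hl hdom b) (conjFn_ne_bot hg b)
  have : conjFn g a ≤ ((conjFn g b).toReal + dist a b : ℝ) := conjFn_le_coe hg.2 fun x hx => by
    have h₁ := sum_mul_le_sum_mul_add_dist (hdom x hx) a b
    have h₂ := coe_sub_toReal_le_conjFn hx b
    rw [← hb, EReal.coe_le_coe_iff] at h₂
    linarith
  simpa only [EReal.toReal_coe] using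
    EReal.toReal_le_toReal this (conjFn_ne_bot hg a) (EReal.coe_ne_top _)

end ConjugateOnSimplex

section DynamicProgramming

variable {ℓ : LSp T n} {F : FSp T n} {φ : PhiSp T} {α : ASp T n} {γ : Msp T n} {P : Psp T}
  {u : Msp T n}

/-- `U[γ,P]`. -/
def dpSolution (ℓ : LSp T n) (α : ASp T n) (γ : Msp T n) (P : Psp T) : Msp T n :=
  Fin.reverseInduction (motive := fun _ => Fin n → ℝ) (γ (Fin.last T))
    fun t v x => γ t.castSucc x - (conjFn (ℓ t x) fun y => -(α t x y * P t + v y)).toReal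

@[simp]
lemma dpSolution_last : dpSolution ℓ α γ P (Fin.last T) = γ (Fin.last T) :=
  Fin.reverseInduction_last

lemma dpSolution_castSucc (t : Fin T) (x : Fin n) :
    dpSolution ℓ α γ P t.castSucc x =
      γ t.castSucc x - (dpCost ℓ α (dpSolution ℓ α γ P) P t x).toReal := by
  simp only [dpSolution, dpCost, Fin.reverseInduction_castSucc]

lemma coe_toReal_dpCost (hconv : ConvAssumption ℓ F φ) (u : Msp T n) (P : Psp T) (t : Fin T)
    (x : Fin n) : ((dpCost ℓ α u P t x).toReal : EReal) = dpCost ℓ α u P t x :=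
  let ⟨hp, _, hl, hdom⟩ := hconv.1 t x
  EReal.coe_toReal (conjFn_ne_top hp hl hdom _) (conjFn_ne_bot hp _)

lemma isDP_dpSolution (hconv : ConvAssumption ℓ F φ) : IsDP ℓ α γ P (dpSolution ℓ α γ P) := by
  refine ⟨fun t x => ?_, fun x => by simp⟩
  rw [dpSolution_castSucc]
  nth_rewrite 2 [← coe_toReal_dpCost hconv]
  rw [← EReal.coe_add, sub_add_cancel]

lemma IsDP.feasD (h : IsDP ℓ α γ P u) : FeasD ℓ α (u, γ, P) :=
  ⟨fun t x => (h.1 t x).le, h.2⟩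

lemma FeasD.le_dpSolution (hconv : ConvAssumption ℓ F φ) (h : FeasD ℓ α (u, γ, P)) :
    u ≤ dpSolution ℓ α γ P := by
  intro s
  induction s using Fin.reverseInduction with
  | last => exact fun x => (h.2 x).le.trans (by simp)
  | cast t ih =>
    intro x
    have hcost : dpCost ℓ α (dpSolution ℓ α γ P) P t x ≤ dpCost ℓ α u P t x :=
      conjFn_mono (hconv.1 t x).2.2.2 fun y => by linarith [ih y]
    have := (add_le_add le_rfl hcost).trans (h.1 t x)
    rw [← coe_toReal_dpCost hconv, ← EReal.coe_add, EReal.coe_le_coe_iff] at this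
    rw [dpSolution_castSucc]
    linarith

lemma IsDP.eq_dpSolution (hconv : ConvAssumption ℓ F φ) (h : IsDP ℓ α γ P u) :
    u = dpSolution ℓ α γ P := by
  funext s
  induction s using Fin.reverseInduction with
  | last => exact funext fun x => by simp [h.2 x]
  | cast t ih =>
    funext x
    have hcost : dpCost ℓ α u P t x = dpCost ℓ α (dpSolution ℓ α γ P) P t x := by
      simp only [dpCost, ih]
    have := h.1 t x
    rw [hcost, ← coe_toReal_dpCost hconv, ← EReal.coe_add, EReal.coe_eq_coe_iff] at this
    rw [dpSolution_castSucc]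
    linarith

lemma continuous_dpSolution (hconv : ConvAssumption ℓ F φ) :
    Continuous fun p : Msp T n × Psp T => dpSolution ℓ α p.1 p.2 := by
  refine continuous_pi fun s => ?_
  induction s using Fin.reverseInduction with
  | last => simp only [dpSolution_last]; fun_prop
  | cast t ih =>
    refine continuous_pi fun x => ?_
    simp only [dpSolution_castSucc, dpCost]
    obtain ⟨hp, -, hl, hdom⟩ := hconv.1 t x
    have hconj := (lipschitzWith_conjFn_toReal hp hl hdom).continuous
    exact (by fun_prop : Continuous fun p : Msp T n × Psp T => p.1 t.castSucc x).sub
      (hconj.comp (by fun_prop))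

end DynamicProgramming

section DualProblems

variable {ℓ : LSp T n} {F : FSp T n} {φ : PhiSp T} {α : ASp T n} {m0 : Fin n → ℝ}
  {u γ : Msp T n} {P : Psp T}

lemma dobj_mono (hm0 : ∀ x, 0 ≤ m0 x) {u' : Msp T n} (h : u 0 ≤ u' 0) :
    Dobj F φ m0 (u, γ, P) ≤ Dobj F φ m0 (u', γ, P) :=
  EReal.sub_le_sub (EReal.sub_le_sub (EReal.coe_le_coe_iff.2 (sum_le_sum fun x _ =>
    mul_le_mul_of_nonneg_left (h x) (hm0 x))) le_rfl) le_rfl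

lemma FeasD.dobj_le_dpSolution (hconv : ConvAssumption ℓ F φ) (hm0 : ∀ x, 0 ≤ m0 x)
    (h : FeasD ℓ α (u, γ, P)) :
    Dobj F φ m0 (u, γ, P) ≤ Dobj F φ m0 (dpSolution ℓ α γ P, γ, P) :=
  dobj_mono hm0 (h.le_dpSolution hconv 0)

lemma valD_eq_valDt (hconv : ConvAssumption ℓ F φ) (hm0 : ∀ x, 0 ≤ m0 x) :
    valD ℓ F φ α m0 = valDt ℓ F φ α m0 :=
  le_antisymm
    (iSup₂_le fun _ hk => (hk.dobj_le_dpSolution hconv hm0).trans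
      (le_iSup₂ (f := fun k _ => Dobj F φ m0 k) (_, _, _) (isDP_dpSolution hconv)))
    (iSup₂_le fun k hk => le_iSup₂ (f := fun k _ => Dobj F φ m0 k) k hk.feasD)

lemma IsSolD.isSolDt (hconv : ConvAssumption ℓ F φ) (hm0 : ∀ x, 0 ≤ m0 x)
    (h : IsSolD ℓ F φ α m0 (u, γ, P)) {û : Msp T n} (hû : IsDP ℓ α γ P û) :
    IsSolDt ℓ F φ α m0 γ P û := by
  refine ⟨hû, fun γ' P' u' h' => (h.2 _ h'.feasD).trans ?_⟩
  rw [hû.eq_dpSolution hconv]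
  exact h.1.dobj_le_dpSolution hconv hm0

lemma IsSolDt.isSolD (hconv : ConvAssumption ℓ F φ) (hm0 : ∀ x, 0 ≤ m0 x)
    (h : IsSolDt ℓ F φ α m0 γ P u) : IsSolD ℓ F φ α m0 (u, γ, P) :=
  ⟨h.1.feasD, fun _ h' =>
    (h'.dobj_le_dpSolution hconv hm0).trans (h.2 _ _ _ (isDP_dpSolution hconv))⟩

end DualProblems

section WeakDuality

variable {ℓ : LSp T n} {F : FSp T n} {φ : PhiSp T} {α : ASp T n} {m0 : Fin n → ℝ}
  {u γ : Msp T n} {P : Psp T} {π : Wsp T n} {m1 : Msp T n}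

lemma FeasD.le_add_cost (h : FeasD ℓ α (u, γ, P)) {t : Fin T} {x : Fin n} {ρ : Fin n → ℝ}
    (hρ : ℓ t x ρ ≠ ⊤) :
    u t.castSucc x ≤
      γ t.castSucc x + (ℓ t x ρ).toReal + ∑ y, ρ y * (α t x y * P t + u t.succ y) := by
  have := (add_le_add le_rfl (coe_sub_toReal_le_conjFn hρ _)).trans (h.1 t x)
  rw [← EReal.coe_add, EReal.coe_le_coe_iff] at this
  simp only [mul_neg, sum_neg_distrib] at this
  linarith

lemma FeasD.sum_mul_castSucc_le (h : FeasD ℓ α (u, γ, P)) (hπ : ∀ t x, ℓ t x (π t x) ≠ ⊤)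
    (hkol : IsKol m0 π m1) (hm1 : ∀ s x, 0 ≤ m1 s x) (t : Fin T) :
    ∑ x, m1 t.castSucc x * u t.castSucc x ≤ ∑ x, m1 t.castSucc x * γ t.castSucc x +
      ∑ x, m1 t.castSucc x * (ℓ t x (π t x)).toReal + Qcpl α m1 π t * P t +
      ∑ y, m1 t.succ y * u t.succ y := by
  calc ∑ x, m1 t.castSucc x * u t.castSucc x
      ≤ ∑ x, m1 t.castSucc x * (γ t.castSucc x + (ℓ t x (π t x)).toReal +
          ∑ y, π t x y * (α t x y * P t + u t.succ y)) :=
        sum_le_sum fun x _ => mul_le_mul_of_nonneg_left (h.le_add_cost (hπ t x)) (hm1 _ x)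
    _ = _ := by
        simp only [hkol.2, Qcpl, mul_add, mul_sum, sum_add_distrib, sum_mul]
        rw [sum_comm (f := fun x y => m1 t.castSucc x * (π t x y * u t.succ y))]
        simp only [mul_assoc, add_assoc]

lemma FeasD.sum_mul_le_of_isKol (h : FeasD ℓ α (u, γ, P)) (hπ : ∀ t x, ℓ t x (π t x) ≠ ⊤)
    (hkol : IsKol m0 π m1) (hm1 : ∀ s x, 0 ≤ m1 s x) :
    ∑ x, m0 x * u 0 x ≤ ∑ t, ∑ x, m1 t.castSucc x * (ℓ t x (π t x)).toReal +
      ∑ s, ∑ x, m1 s x * γ s x + ∑ t, Qcpl α m1 π t * P t := by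
  set f : Fin (T + 1) → ℝ := fun s => ∑ x, m1 s x * u s x
  have h0 : f 0 = ∑ x, m0 x * u 0 x := by simp only [f, hkol.1]
  have hu : ∀ x, u (Fin.last T) x = γ (Fin.last T) x := h.2
  have hlast : f (Fin.last T) = ∑ x, m1 (Fin.last T) x * γ (Fin.last T) x := by
    simp only [f, hu]
  have htel : ∑ t : Fin T, (f t.castSucc - f t.succ) = f 0 - f (Fin.last T) := by
    have := Fin.sum_univ_castSucc f
    have := Fin.sum_univ_succ f
    rw [sum_sub_distrib]
    linarith
  have hstep : ∑ t : Fin T, (f t.castSucc - f t.succ) ≤ ∑ t : Fin T,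
      (∑ x, m1 t.castSucc x * γ t.castSucc x + ∑ x, m1 t.castSucc x * (ℓ t x (π t x)).toReal +
        Qcpl α m1 π t * P t) :=
    sum_le_sum fun t _ => by linarith [h.sum_mul_castSucc_le hπ hkol hm1 t]
  rw [Fin.sum_univ_castSucc fun s => ∑ x, m1 s x * γ s x]
  simp only [sum_add_distrib] at hstep
  linarith

lemma FeasD.dobj_le_of_isKol (h : FeasD ℓ α (u, γ, P)) (hπ : ∀ t x, ℓ t x (π t x) ≠ ⊤)
    (hkol : IsKol m0 π m1) (hm1 : ∀ s x, 0 ≤ m1 s x) {m2 : Msp T n}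
    (hm2 : ∀ s, F s (m2 s) ≠ ⊤) {D : Psp T} (hD : ∀ t, φ t (D t) ≠ ⊤) :
    Dobj F φ m0 (u, γ, P) ≤ ((∑ t, ∑ x, m1 t.castSucc x * (ℓ t x (π t x)).toReal +
      ∑ s, (F s (m2 s)).toReal + ∑ t, (φ t (D t)).toReal +
      ∑ s, ∑ x, (m1 s x - m2 s x) * γ s x + ∑ t, (Qcpl α m1 π t - D t) * P t : ℝ) : EReal) := by
  have hφ : ((∑ t, (D t * P t - (φ t (D t)).toReal) : ℝ) : EReal) ≤ ∑ t, conjR (φ t) (P t) := by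
    rw [EReal.coe_finset_sum]
    exact sum_le_sum fun t _ => coe_sub_toReal_le_conjR (hD t) _
  have hF : ((∑ s, (∑ x, m2 s x * γ s x - (F s (m2 s)).toReal) : ℝ) : EReal) ≤
      ∑ s, conjFn (F s) (γ s) := by
    rw [EReal.coe_finset_sum]
    exact sum_le_sum fun s _ => coe_sub_toReal_le_conjFn (hm2 s) _
  refine (EReal.sub_le_sub (EReal.sub_le_sub le_rfl hφ) hF).trans ?_
  rw [← EReal.coe_sub, ← EReal.coe_sub, EReal.coe_le_coe_iff]
  have := h.sum_mul_le_of_isKol hπ hkol hm1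
  simp only [sub_mul, sum_sub_distrib]
  linarith

end WeakDuality

lemma IsKolPert.isKol_zero {m0 : Fin n → ℝ} {π : Wsp T n} {m1 : Msp T n}
    (h : IsKolPert m0 0 π m1) : IsKol m0 π m1 :=
  ⟨fun x => by simpa [mbar0] using h.1 x, fun t x => by simpa using h.2 t x⟩

lemma qnorm_neg (ε1 ε2 : Msp T n) (ε3 : Psp T) : qnorm (-ε1) (-ε2) (-ε3) = qnorm ε1 ε2 ε3 := by
  simp [qnorm]

lemma qnorm_single_fst (s : Fin (T + 1)) (x : Fin n) (a : ℝ) :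
    qnorm 0 (Pi.single s (Pi.single x a)) (0 : Psp T) = |a| := by
  simp [qnorm, Pi.single_apply, ite_apply, Real.sqrt_sq_eq_abs]

lemma qnorm_single_snd (t : Fin T) (a : ℝ) :
    qnorm (0 : Msp T n) 0 (Pi.single t a) = |a| := by
  simp [qnorm, Pi.single_apply, Real.sqrt_sq_eq_abs]

section Qualification

variable {ℓ : LSp T n} {F : FSp T n} {φ : PhiSp T} {α : ASp T n} {m0 : Fin n → ℝ}

lemma Qualif.exists_dobj_le (hqual : Qualif ℓ F φ α m0) :
    ∃ α0 > 0, ∀ (ε2 : Msp T n) (ε3 : Psp T), qnorm 0 ε2 ε3 ≤ α0 → ∃ C : ℝ,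
      ∀ u γ P, FeasD ℓ α (u, γ, P) →
        Dobj F φ m0 (u, γ, P) ≤
          ((C - (∑ s, ∑ x, ε2 s x * γ s x + ∑ t, ε3 t * P t) : ℝ) : EReal) := by
  obtain ⟨α0, hα0, H⟩ := hqual
  refine ⟨α0, hα0, fun ε2 ε3 hε => ?_⟩
  obtain ⟨π, hπ, m1, hkol, hm1, hF, hφ⟩ := H 0 ε2 ε3 hε
  refine ⟨∑ t, ∑ x, m1 t.castSucc x * (ℓ t x (π t x)).toReal +
    ∑ s, (F s fun x => m1 s x + ε2 s x).toReal + ∑ t, (φ t (Qcpl α m1 π t + ε3 t)).toReal,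
    fun u γ P h => (h.dobj_le_of_isKol hπ hkol.isKol_zero hm1 hF hφ).trans_eq ?_⟩
  simp only [sub_add_cancel_left, neg_mul, sum_neg_distrib]
  congr 1
  ring

lemma Qualif.exists_abs_pairing_le (hqual : Qualif ℓ F φ α m0) (μ : ℝ) :
    ∃ α0 > 0, ∀ (ε2 : Msp T n) (ε3 : Psp T), qnorm 0 ε2 ε3 ≤ α0 → ∃ C : ℝ,
      ∀ u γ P, FeasD ℓ α (u, γ, P) → (μ : EReal) ≤ Dobj F φ m0 (u, γ, P) →
        |∑ s, ∑ x, ε2 s x * γ s x + ∑ t, ε3 t * P t| ≤ C := by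
  obtain ⟨α0, hα0, H⟩ := hqual.exists_dobj_le
  refine ⟨α0, hα0, fun ε2 ε3 hε => ?_⟩
  obtain ⟨C₁, hC₁⟩ := H ε2 ε3 hε
  obtain ⟨C₂, hC₂⟩ := H (-ε2) (-ε3) (by simpa [← qnorm_neg 0 ε2 ε3] using hε)
  refine ⟨max (C₁ - μ) (C₂ - μ), fun u γ P h hμ => abs_le'.2 ⟨?_, ?_⟩⟩
  · have := EReal.coe_le_coe_iff.1 (hμ.trans (hC₁ u γ P h))
    exact le_max_of_le_left (by linarith)
  · have := EReal.coe_le_coe_iff.1 (hμ.trans (hC₂ u γ P h))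
    simp only [Pi.neg_apply, neg_mul, sum_neg_distrib] at this
    exact le_max_of_le_right (by linarith)

end Qualification

section ReducedDual

variable {ℓ : LSp T n} {F : FSp T n} {φ : PhiSp T} {α : ASp T n} {m0 : Fin n → ℝ}

/-- `D̃(γ,P)`. -/
def DtObj (ℓ : LSp T n) (F : FSp T n) (φ : PhiSp T) (α : ASp T n) (m0 : Fin n → ℝ)
    (p : Msp T n × Psp T) : EReal :=
  Dobj F φ m0 (dpSolution ℓ α p.1 p.2, p.1, p.2)

lemma upperSemicontinuous_DtObj (hconv : ConvAssumption ℓ F φ) :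
    UpperSemicontinuous (DtObj ℓ F φ α m0) := by
  have hφ : ∀ p : Msp T n × Psp T, ∑ t, conjR (φ t) (p.2 t) ≠ ⊥ := fun p =>
    EReal.finset_sum_ne_bot fun t _ => conjR_ne_bot (hconv.2.2 t).1 _
  have hF : ∀ p : Msp T n × Psp T, ∑ s, conjFn (F s) (p.1 s) ≠ ⊥ := fun p =>
    EReal.finset_sum_ne_bot fun s _ => conjFn_ne_bot (hconv.2.1 s).1 _
  have hφlsc : LowerSemicontinuous fun p : Msp T n × Psp T => ∑ t, conjR (φ t) (p.2 t) :=
    lowerSemicontinuous_finset_sum_of_ne_bot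
      (fun t _ => lowerSemicontinuous_conjR.comp (by fun_prop))
      fun t _ _ => conjR_ne_bot (hconv.2.2 t).1 _
  have hFlsc : LowerSemicontinuous fun p : Msp T n × Psp T => ∑ s, conjFn (F s) (p.1 s) :=
    lowerSemicontinuous_finset_sum_of_ne_bot
      (fun s _ => lowerSemicontinuous_conjFn.comp (by fun_prop))
      fun s _ _ => conjFn_ne_bot (hconv.2.1 s).1 _
  have hU := continuous_dpSolution (α := α) hconv
  have hvalue : UpperSemicontinuous fun p : Msp T n × Psp T =>
      ((∑ x, m0 x * dpSolution ℓ α p.1 p.2 0 x : ℝ) : EReal) :=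
    (continuous_coe_real_ereal.comp (by fun_prop)).upperSemicontinuous
  exact (hvalue.sub_lowerSemicontinuous hφlsc (fun _ => EReal.coe_ne_top _) hφ
    ).sub_lowerSemicontinuous hFlsc
      (fun p => (EReal.add_lt_top (EReal.coe_ne_top _) (by simpa using hφ p)).ne) hF

lemma isCompact_superlevel_DtObj (hconv : ConvAssumption ℓ F φ) (hqual : Qualif ℓ F φ α m0)
    (c : ℝ) : IsCompact {p | (c : EReal) ≤ DtObj ℓ F φ α m0 p} := by
  obtain ⟨α0, hα0, H⟩ := hqual.exists_abs_pairing_le c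
  choose Cγ hCγ using fun s x => H _ _ (qnorm_single_fst s x α0 ▸ (abs_of_pos hα0).le)
  choose CP hCP using fun t => H _ _ (qnorm_single_snd (n := n) t α0 ▸ (abs_of_pos hα0).le)
  refine IsCompact.of_isClosed_subset
    ((isCompact_univ_pi fun s => isCompact_univ_pi fun x =>
      isCompact_Icc (a := -(Cγ s x / α0)) (b := Cγ s x / α0)).prod
      (isCompact_univ_pi fun t => isCompact_Icc (a := -(CP t / α0)) (b := CP t / α0)))
    ((upperSemicontinuous_DtObj hconv).isClosed_preimage c) ?_
  rintro ⟨γ, P⟩ hp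
  have hfeas := (isDP_dpSolution (α := α) (γ := γ) (P := P) hconv).feasD
  simp only [Set.mem_prod, Set.mem_univ_pi, Set.mem_Icc, ← abs_le]
  refine ⟨fun s x => abs_le_div_of_abs_mul_le hα0 ?_, fun t => abs_le_div_of_abs_mul_le hα0 ?_⟩
  · simpa [Pi.single_apply, ite_apply] using hCγ s x _ γ P hfeas hp
  · simpa [Pi.single_apply, ite_apply] using hCP t _ γ P hfeas hp

lemma Qualif.exists_isSolDt (hconv : ConvAssumption ℓ F φ) (hqual : Qualif ℓ F φ α m0) :
    ∃ γ P u, IsSolDt ℓ F φ α m0 γ P u := by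
  obtain ⟨⟨γ, P⟩, hmax⟩ :=
    (upperSemicontinuous_DtObj hconv).exists_forall_le_of_isCompact_superlevel
      (isCompact_superlevel_DtObj hconv hqual)
  refine ⟨γ, P, _, isDP_dpSolution hconv, fun γ' P' u' h' => ?_⟩
  rw [h'.eq_dpSolution hconv]
  exact hmax (γ', P')

end ReducedDual

theorem dual_problems_equivalence_general {T n : ℕ}
    (ℓ : LSp T n) (F : FSp T n) (φ : PhiSp T) (α : ASp T n)
    (m0 : Fin n → ℝ) (hm0 : m0 ∈ simplex n)
    (hconv : ConvAssumption ℓ F φ) (hqual : Qualif ℓ F φ α m0) :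
    valD ℓ F φ α m0 = valDt ℓ F φ α m0 ∧
    (∀ (u γ : Msp T n) (P : Psp T), IsSolD ℓ F φ α m0 (u, γ, P) →
      ∀ uh : Msp T n, IsDP ℓ α γ P uh → IsSolDt ℓ F φ α m0 γ P uh) ∧
    (∃ (γ : Msp T n) (P : Psp T) (u : Msp T n), IsSolDt ℓ F φ α m0 γ P u) ∧
    (∀ (γ : Msp T n) (P : Psp T) (u : Msp T n), IsSolDt ℓ F φ α m0 γ P u →
      IsSolD ℓ F φ α m0 (u, γ, P)) := by
  have hm0' : ∀ x, 0 ≤ m0 x := fun x => (hm0.1 x).1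
  exact ⟨valD_eq_valDt hconv hm0', fun _ _ _ h _ huh => h.isSolDt hconv hm0' huh,
    hqual.exists_isSolDt hconv, fun _ _ _ h => h.isSolD hconv hm0'⟩

/-- Lemma 4: `val(D) = val(D̃)`; any solution `(u,γ,P)` of (D)
yields a solution `(γ,P)` of (D̃); (D̃) has at least one solution; and any
solution `(γ,P)` of (D̃) yields a solution `(U[γ,P],γ,P)` of (D). -/
theorem dual_problems_equivalence {T n : ℕ} (hT : 1 ≤ T) (hn : 1 ≤ n)
    (ℓ : LSp T n) (F : FSp T n) (φ : PhiSp T) (α : ASp T n)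
    (m0 : Fin n → ℝ) (hm0 : m0 ∈ simplex n)
    (hconv : ConvAssumption ℓ F φ) (hqual : Qualif ℓ F φ α m0) :
    valD ℓ F φ α m0 = valDt ℓ F φ α m0 ∧
    (∀ (u γ : Msp T n) (P : Psp T), IsSolD ℓ F φ α m0 (u, γ, P) →
      ∀ uh : Msp T n, IsDP ℓ α γ P uh → IsSolDt ℓ F φ α m0 γ P uh) ∧
    (∃ (γ : Msp T n) (P : Psp T) (u : Msp T n), IsSolDt ℓ F φ α m0 γ P u) ∧
    (∀ (γ : Msp T n) (P : Psp T) (u : Msp T n), IsSolDt ℓ F φ α m0 γ P u →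
      IsSolD ℓ F φ α m0 (u, γ, P)) :=
  dual_problems_equivalence_general ℓ F φ α m0 hm0 hconv hqual

end
end

section
/- Dynamic programming representation: under the convexity assumption, for every (γ,P) ∈ ℝ(𝒯̄×S)×ℝ(𝒯) and every (t,x) ∈ 𝒯×S, U[γ,P](t,x) = inf_{π∈Δ} E[ Σ_{s=t}^{T−1} ( ℓ(s,X_s^π,π(s,X_s^π,·)) + γ(s,X_s^π) + α(s,X_s^π,X_{s+1}^π)P(s) ) + γ(T,X_T^π) ], where (X_s^π)_{s=t,…,T} is the Markov chain on S with X_t^π = x and transition probabilities P(X_{s+1}^π = y | X_s^π = x') = π(s,x',y). -/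
noncomputable section
open Finset Filter Topology Bornology
open scoped Classical Pointwise

variable {T n : ℕ}

/-- Probability of a path of the controlled Markov chain started at time `t`
(only transitions at times `s ≥ t` count). -/
def pathW {T n : ℕ} (π : Wsp T n) (t : Fin T) (p : Fin (T + 1) → Fin n) : ℝ :=
  ∏ s ∈ univ.filter (fun s : Fin T => t ≤ s), π s (p s.castSucc) (p s.succ)

/-- Cost along a path: running costs from time `t` to `T-1` plus final cost. -/
def pathC {T n : ℕ} (ℓ : LSp T n) (α : ASp T n) (γ : Msp T n) (P : Psp T)
    (π : Wsp T n) (t : Fin T) (p : Fin (T + 1) → Fin n) : EReal :=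
  (∑ s ∈ univ.filter (fun s : Fin T => t ≤ s),
      (ℓ s (p s.castSucc) (π s (p s.castSucc)) + ↑(γ s.castSucc (p s.castSucc)) +
        ↑(α s (p s.castSucc) (p s.succ) * P s))) +
    ↑(γ (Fin.last T) (p (Fin.last T)))

/-- Expected cost of the controlled Markov chain started from `x` at time `t`:
finite sum over all paths pinned at `x` up to time `t`, weighted by the
products of the transition probabilities. -/
def expCost {T n : ℕ} (ℓ : LSp T n) (α : ASp T n) (γ : Msp T n) (P : Psp T)
    (π : Wsp T n) (t : Fin T) (x : Fin n) : EReal :=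
  ∑ p ∈ univ.filter
      (fun p : Fin (T + 1) → Fin n => ∀ s : Fin (T + 1), s ≤ t.castSucc → p s = x),
    (↑(pathW π t p) : EReal) * pathC ℓ α γ P π t p

/-! Fenchel–Young applied to the dynamic programming equation shows that `u (t, x)` is the
infimum over `ρ` of the one-step cost `ℓ(t,x,ρ) + γ(t,x) + ∑ y, ρ y (α(t,x,y) P(t) + u(t+1,y))`,
and the infimum is approached by `ρ` of finite cost, which lie in `Δ(S)`. Conditioning on the
first transition, the expected cost of a policy obeys the same recursion with `u(t+1, ·)`
replaced by the policy's own expected cost from time `t + 1`. Backward induction then gives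
`u ≤` expected cost for every policy and, gluing `ε/2`-optimal distributions at each time,
a policy whose expected cost is within `ε` of `u`. -/

namespace EReal

@[norm_cast]
theorem coe_finset_sum_s7 {ι : Type*} (s : Finset ι) (f : ι → ℝ) :
    ((∑ i ∈ s, f i : ℝ) : EReal) = ∑ i ∈ s, (f i : EReal) :=
  map_sum (⟨⟨Real.toEReal, coe_zero⟩, coe_add⟩ : ℝ →+ EReal) f s

theorem coe_mul_finset_sum_of_nonneg {r : ℝ} (hr : 0 ≤ r) {ι : Type*} (s : Finset ι)
    (f : ι → EReal) : (r : EReal) * ∑ i ∈ s, f i = ∑ i ∈ s, (r : EReal) * f i :=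
  map_sum (⟨⟨fun a => (r : EReal) * a, mul_zero _⟩,
    left_distrib_of_nonneg_of_ne_top (EReal.coe_nonneg.2 hr) (coe_ne_top r)⟩ : EReal →+ EReal) f s

theorem finset_sum_coe_mul_of_nonneg {ι : Type*} (s : Finset ι) {w : ι → ℝ}
    (hw : ∀ i ∈ s, 0 ≤ w i) (a : EReal) :
    ∑ i ∈ s, (w i : EReal) * a = ((∑ i ∈ s, w i : ℝ) : EReal) * a := by
  induction s using Finset.induction with
  | empty => simp
  | insert i s hi ih =>
    rw [sum_insert hi, sum_insert hi, ih fun j hj => hw j (mem_insert_of_mem hj), coe_add,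
      right_distrib_of_nonneg (EReal.coe_nonneg.2 (hw i (mem_insert_self i s)))
        (EReal.coe_nonneg.2 (sum_nonneg fun j hj => hw j (mem_insert_of_mem hj)))]

theorem finset_sum_coe_mul_add {ι : Type*} (s : Finset ι) {w : ι → ℝ}
    (hw : ∀ i ∈ s, 0 ≤ w i) (hw1 : ∑ i ∈ s, w i = 1) (a : EReal) (f : ι → EReal) :
    ∑ i ∈ s, (w i : EReal) * (a + f i) = a + ∑ i ∈ s, (w i : EReal) * f i := by
  rw [sum_congr rfl fun i hi => left_distrib_of_nonneg_of_ne_top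
      (EReal.coe_nonneg.2 (hw i hi)) (coe_ne_top _) a (f i),
    sum_add_distrib, finset_sum_coe_mul_of_nonneg s hw, hw1, coe_one, one_mul]

end EReal

section FenchelYoung

variable {d : Type*} [Fintype d] {g : (d → ℝ) → EReal} {y : d → ℝ} {c : ℝ}

theorem coe_sum_mul_sub_le_of_conjFn_eq (h : conjFn g y = c) (x : d → ℝ) :
    ((∑ i, x i * y i - c : ℝ) : EReal) ≤ g x := by
  have hle : (↑(∑ i, x i * y i) : EReal) - g x ≤ c :=
    h ▸ le_iSup (fun x : d → ℝ => (↑(∑ i, x i * y i) : EReal) - g x) x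
  generalize g x = b at hle ⊢
  induction b using EReal.rec with
  | bot => simp at hle
  | top => exact le_top
  | coe a =>
    rw [← EReal.coe_sub, EReal.coe_le_coe_iff] at hle
    exact EReal.coe_le_coe_iff.2 (by linarith)

theorem exists_lt_coe_sum_mul_sub_add_of_conjFn_eq (h : conjFn g y = c) {ε : ℝ}
    (hε : 0 < ε) : ∃ x, g x < ((∑ i, x i * y i - c + ε : ℝ) : EReal) := by
  have hlt : ((c - ε : ℝ) : EReal) < conjFn g y := h ▸ EReal.coe_lt_coe_iff.2 (by linarith)
  obtain ⟨x, hx⟩ := lt_iSup_iff.1 hlt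
  refine ⟨x, ?_⟩
  generalize g x = b at hx ⊢
  induction b using EReal.rec with
  | bot => exact EReal.bot_lt_coe _
  | top => simp at hx
  | coe a =>
    rw [← EReal.coe_sub, EReal.coe_lt_coe_iff] at hx
    exact EReal.coe_lt_coe_iff.2 (by linarith)

end FenchelYoung

namespace ControlledChain

def pinnedPaths (s : Fin (T + 1)) (x : Fin n) : Finset (Fin (T + 1) → Fin n) :=
  univ.filter fun p => ∀ r ≤ s, p r = x

def pathWeight (π : Wsp T n) (s : Fin (T + 1)) (p : Fin (T + 1) → Fin n) : ℝ :=
  ∏ r ∈ univ.filter (fun r : Fin T => s ≤ r.castSucc), π r (p r.castSucc) (p r.succ)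

def pathCost (ℓ : LSp T n) (α : ASp T n) (γ : Msp T n) (P : Psp T) (π : Wsp T n)
    (s : Fin (T + 1)) (p : Fin (T + 1) → Fin n) : EReal :=
  (∑ r ∈ univ.filter (fun r : Fin T => s ≤ r.castSucc),
      (ℓ r (p r.castSucc) (π r (p r.castSucc)) + ↑(γ r.castSucc (p r.castSucc)) +
        ↑(α r (p r.castSucc) (p r.succ) * P r))) +
    ↑(γ (Fin.last T) (p (Fin.last T)))

/-- `expCost` with the starting time allowed to be the horizon `T` itself. -/
def costFrom (ℓ : LSp T n) (α : ASp T n) (γ : Msp T n) (P : Psp T) (π : Wsp T n)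
    (s : Fin (T + 1)) (x : Fin n) : EReal :=
  ∑ p ∈ pinnedPaths s x, (pathWeight π s p : EReal) * pathCost ℓ α γ P π s p

theorem expCost_eq_costFrom (ℓ : LSp T n) (α : ASp T n) (γ : Msp T n) (P : Psp T)
    (π : Wsp T n) (t : Fin T) (x : Fin n) :
    expCost ℓ α γ P π t x = costFrom ℓ α γ P π t.castSucc x := by
  simp only [expCost, costFrom, pathW, pathWeight, pathC, pathCost, pinnedPaths,
    Fin.castSucc_le_castSucc_iff]

theorem filter_last_le_castSucc :
    univ.filter (fun r : Fin T => Fin.last T ≤ r.castSucc) = ∅ :=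
  filter_false_of_mem fun r _ => not_le.2 (Fin.castSucc_lt_last r)

theorem filter_castSucc_le_castSucc (t : Fin T) :
    univ.filter (fun r : Fin T => t.castSucc ≤ r.castSucc) =
      insert t (univ.filter fun r : Fin T => t.succ ≤ r.castSucc) := by
  ext r
  simp only [mem_filter, mem_univ, true_and, mem_insert, Fin.le_def, Fin.val_castSucc,
    Fin.val_succ, Fin.ext_iff]
  omega

theorem notMem_filter_succ_le_castSucc (t : Fin T) :
    t ∉ univ.filter (fun r : Fin T => t.succ ≤ r.castSucc) := by
  simp [Fin.le_def]

theorem pinnedPaths_last (x : Fin n) : pinnedPaths (Fin.last T) x = {fun _ => x} := by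
  ext p
  simp only [pinnedPaths, mem_filter, mem_univ, true_and, mem_singleton]
  exact ⟨fun h => funext fun r => h r (Fin.le_last r), fun h r _ => h ▸ rfl⟩

theorem pinnedPaths_subset {s s' : Fin (T + 1)} (h : s ≤ s') (x : Fin n) :
    pinnedPaths s' x ⊆ pinnedPaths s x := by
  intro p hp
  simp only [pinnedPaths, mem_filter, mem_univ, true_and] at hp ⊢
  exact fun r hr => hp r (hr.trans h)

def resetUpTo (x : Fin n) (t : Fin T) (p : Fin (T + 1) → Fin n) : Fin (T + 1) → Fin n :=
  fun s => if s ≤ t.castSucc then x else p s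

section resetUpTo

variable {x y : Fin n} {t : Fin T} {p : Fin (T + 1) → Fin n}

theorem resetUpTo_of_le {s : Fin (T + 1)} (h : s ≤ t.castSucc) : resetUpTo x t p s = x :=
  if_pos h

theorem resetUpTo_of_lt {s : Fin (T + 1)} (h : t.castSucc < s) : resetUpTo x t p s = p s :=
  if_neg (not_le.2 h)

theorem resetUpTo_succ : resetUpTo x t p t.succ = p t.succ :=
  resetUpTo_of_lt Fin.castSucc_lt_succ

theorem resetUpTo_resetUpTo : resetUpTo x t (resetUpTo y t p) = resetUpTo x t p := by
  funext s
  simp only [resetUpTo]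
  split_ifs <;> rfl

theorem resetUpTo_eq_self (hp : p ∈ pinnedPaths t.castSucc x) : resetUpTo x t p = p := by
  simp only [pinnedPaths, mem_filter, mem_univ, true_and] at hp
  funext s
  by_cases h : s ≤ t.castSucc
  · rw [resetUpTo_of_le h, hp s h]
  · rw [resetUpTo_of_lt (not_le.1 h)]

theorem resetUpTo_mem_pinnedPaths_castSucc : resetUpTo x t p ∈ pinnedPaths t.castSucc x := by
  simp only [pinnedPaths, mem_filter, mem_univ, true_and]
  exact fun r hr => resetUpTo_of_le hr

theorem resetUpTo_mem_pinnedPaths_succ (hp : p t.succ = y) :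
    resetUpTo y t p ∈ pinnedPaths t.succ y := by
  simp only [pinnedPaths, mem_filter, mem_univ, true_and]
  intro r hr
  rcases hr.lt_or_eq with hr | rfl
  · exact resetUpTo_of_le (Fin.le_castSucc_iff.2 hr)
  · rw [resetUpTo_succ, hp]

end resetUpTo

theorem sum_pinnedPaths_castSucc {M : Type*} [AddCommMonoid M] (t : Fin T) (x : Fin n)
    (f : (Fin (T + 1) → Fin n) → M) :
    ∑ p ∈ pinnedPaths t.castSucc x, f p =
      ∑ y, ∑ p ∈ pinnedPaths t.succ y, f (resetUpTo x t p) := by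
  rw [← sum_fiberwise_of_maps_to (g := fun p => p t.succ) (fun _ _ => mem_univ _)]
  refine sum_congr rfl fun y _ =>
    sum_nbij' (resetUpTo y t) (resetUpTo x t) ?_ ?_ ?_ ?_ ?_
  · intro p hp
    exact resetUpTo_mem_pinnedPaths_succ (mem_filter.1 hp).2
  · intro p hp
    refine mem_filter.2 ⟨resetUpTo_mem_pinnedPaths_castSucc, ?_⟩
    rw [resetUpTo_succ, (mem_filter.1 hp).2 t.succ le_rfl]
  · intro p hp
    rw [resetUpTo_resetUpTo, resetUpTo_eq_self (mem_filter.1 hp).1]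
  · intro p hp
    rw [resetUpTo_resetUpTo,
      resetUpTo_eq_self (pinnedPaths_subset (Fin.castSucc_le_succ t) y hp)]
  · intro p hp
    rw [resetUpTo_resetUpTo, resetUpTo_eq_self (mem_filter.1 hp).1]

section evaluation

variable (ℓ : LSp T n) (α : ASp T n) (γ : Msp T n) (P : Psp T)

def bellman (t : Fin T) (x : Fin n) (ρ : Fin n → ℝ) (v : Fin n → EReal) : EReal :=
  ℓ t x ρ + ↑(γ t.castSucc x) + ∑ y, (ρ y : EReal) * (↑(α t x y * P t) + v y)

variable {ℓ α γ P} {π : Wsp T n}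

theorem lt_of_succ_le_castSucc {t r : Fin T} (h : t.succ ≤ r.castSucc) :
    t.castSucc < r.castSucc ∧ t.castSucc < r.succ :=
  ⟨Fin.castSucc_lt_iff_succ_le.2 h, (Fin.castSucc_lt_iff_succ_le.2 h).trans Fin.castSucc_lt_succ⟩

theorem pathWeight_resetUpTo {t : Fin T} {x y : Fin n} {p : Fin (T + 1) → Fin n}
    (hp : p ∈ pinnedPaths t.succ y) :
    pathWeight π t.castSucc (resetUpTo x t p) = π t x y * pathWeight π t.succ p := by
  rw [pathWeight, filter_castSucc_le_castSucc, prod_insert (notMem_filter_succ_le_castSucc t),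
    resetUpTo_of_le le_rfl, resetUpTo_succ, (mem_filter.1 hp).2 t.succ le_rfl]
  congr 1
  refine prod_congr rfl fun r hr => ?_
  obtain ⟨h₁, h₂⟩ := lt_of_succ_le_castSucc (mem_filter.1 hr).2
  rw [resetUpTo_of_lt h₁, resetUpTo_of_lt h₂]

theorem pathCost_resetUpTo {t : Fin T} {x y : Fin n} {p : Fin (T + 1) → Fin n}
    (hp : p ∈ pinnedPaths t.succ y) :
    pathCost ℓ α γ P π t.castSucc (resetUpTo x t p) =
      (ℓ t x (π t x) + ↑(γ t.castSucc x) + ↑(α t x y * P t)) + pathCost ℓ α γ P π t.succ p := by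
  rw [pathCost, pathCost, filter_castSucc_le_castSucc,
    sum_insert (notMem_filter_succ_le_castSucc t), add_assoc, resetUpTo_of_le le_rfl,
    resetUpTo_succ, (mem_filter.1 hp).2 t.succ le_rfl, resetUpTo_of_lt (Fin.castSucc_lt_last t)]
  congr 2
  refine sum_congr rfl fun r hr => ?_
  obtain ⟨h₁, h₂⟩ := lt_of_succ_le_castSucc (mem_filter.1 hr).2
  rw [resetUpTo_of_lt h₁, resetUpTo_of_lt h₂]

theorem pathWeight_nonneg (hπ : InDelta π) (s : Fin (T + 1)) (p : Fin (T + 1) → Fin n) :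
    0 ≤ pathWeight π s p :=
  prod_nonneg fun r _ => ((hπ r (p r.castSucc)).1 (p r.succ)).1

theorem sum_pathWeight (hπ : InDelta π) (s : Fin (T + 1)) (x : Fin n) :
    ∑ p ∈ pinnedPaths s x, pathWeight π s p = 1 := by
  induction s using Fin.reverseInduction generalizing x with
  | last => rw [pinnedPaths_last, sum_singleton, pathWeight, filter_last_le_castSucc, prod_empty]
  | cast t ih =>
    rw [sum_pinnedPaths_castSucc, ← (hπ t x).2]
    refine sum_congr rfl fun y _ => ?_
    rw [sum_congr rfl fun p hp => pathWeight_resetUpTo hp, ← mul_sum, ih, mul_one]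

theorem costFrom_last (x : Fin n) :
    costFrom ℓ α γ P π (Fin.last T) x = γ (Fin.last T) x := by
  rw [costFrom, pinnedPaths_last, sum_singleton, pathWeight, pathCost, filter_last_le_castSucc]
  simp

theorem costFrom_castSucc (hπ : InDelta π) (t : Fin T) (x : Fin n) :
    costFrom ℓ α γ P π t.castSucc x =
      bellman ℓ α γ P t x (π t x) (costFrom ℓ α γ P π t.succ) := by
  have hρ : ∀ y ∈ univ, 0 ≤ π t x y := fun y _ => ((hπ t x).1 y).1
  have hW (y : Fin n) : ∀ p ∈ pinnedPaths t.succ y, 0 ≤ pathWeight π t.succ p :=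
    fun p _ => pathWeight_nonneg hπ _ p
  rw [costFrom, sum_pinnedPaths_castSucc, bellman,
    ← EReal.finset_sum_coe_mul_add _ hρ (hπ t x).2 (ℓ t x (π t x) + ↑(γ t.castSucc x))]
  refine sum_congr rfl fun y _ => ?_
  calc ∑ p ∈ pinnedPaths t.succ y, (pathWeight π t.castSucc (resetUpTo x t p) : EReal) *
        pathCost ℓ α γ P π t.castSucc (resetUpTo x t p)
      = (π t x y : EReal) * ∑ p ∈ pinnedPaths t.succ y, (pathWeight π t.succ p : EReal) *
          ((ℓ t x (π t x) + ↑(γ t.castSucc x) + ↑(α t x y * P t)) +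
            pathCost ℓ α γ P π t.succ p) := by
        rw [EReal.coe_mul_finset_sum_of_nonneg (hρ y (mem_univ y))]
        refine sum_congr rfl fun p hp => ?_
        rw [pathWeight_resetUpTo hp, pathCost_resetUpTo hp, EReal.coe_mul, mul_assoc]
    _ = _ := by
        rw [EReal.finset_sum_coe_mul_add _ (hW y) (sum_pathWeight hπ _ y), add_assoc]
        rfl

theorem costFrom_congr {π' : Wsp T n} {s : Fin (T + 1)}
    (h : ∀ r : Fin T, s ≤ r.castSucc → π r = π' r) (x : Fin n) :
    costFrom ℓ α γ P π s x = costFrom ℓ α γ P π' s x := by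
  refine sum_congr rfl fun p _ => ?_
  rw [pathWeight, pathWeight, pathCost, pathCost,
    prod_congr rfl fun r hr => by rw [h r (mem_filter.1 hr).2],
    sum_congr rfl fun r hr => by rw [h r (mem_filter.1 hr).2]]

end evaluation

section bellman

variable {ℓ : LSp T n} {α : ASp T n} {γ : Msp T n} {P : Psp T} {t : Fin T} {x : Fin n}
  {ρ : Fin n → ℝ}

theorem bellman_coe (v : Fin n → ℝ) :
    bellman ℓ α γ P t x ρ (fun y => (v y : EReal)) =
      ℓ t x ρ + ↑(γ t.castSucc x + ∑ y, ρ y * (α t x y * P t + v y)) := by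
  rw [bellman, add_assoc]
  push_cast
  rfl

theorem bellman_mono (hρ : ∀ y, 0 ≤ ρ y) {v w : Fin n → EReal} (h : v ≤ w) :
    bellman ℓ α γ P t x ρ v ≤ bellman ℓ α γ P t x ρ w := by
  unfold bellman
  gcongr with y
  · exact EReal.coe_nonneg.2 (hρ y)
  · exact h y

theorem bellman_add_coe (hρ : ρ ∈ simplex n) (v : Fin n → EReal) (c : ℝ) :
    bellman ℓ α γ P t x ρ (fun y => v y + c) = bellman ℓ α γ P t x ρ v + c := by
  have hsum : ∑ y, (ρ y : EReal) * (↑(α t x y * P t) + (v y + c)) =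
      ↑c + ∑ y, (ρ y : EReal) * (↑(α t x y * P t) + v y) := by
    rw [← EReal.finset_sum_coe_mul_add _ (fun y _ => (hρ.1 y).1) hρ.2]
    exact sum_congr rfl fun y _ => by congr 1; ac_rfl
  rw [bellman, bellman, hsum, add_left_comm, add_comm]

end bellman

theorem exists_inDelta : ∃ π : Wsp T n, InDelta π :=
  ⟨fun _ x => Pi.single x 1, fun _ x =>
    ⟨fun y => by by_cases h : y = x <;> simp [h], by simp⟩⟩

end ControlledChain

theorem sum_mul_neg_sub_add {ι : Type*} [Fintype ι] (ρ w : ι → ℝ) (a b : ℝ) :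
    ∑ i, ρ i * -w i - (a - b) + (a + ∑ i, ρ i * w i) = b := by
  simp only [mul_neg, sum_neg_distrib]
  ring

namespace IsDP

open ControlledChain

variable {ℓ : LSp T n} {α : ASp T n} {γ : Msp T n} {P : Psp T} {u : Msp T n}

theorem conjFn_eq (hdp : IsDP ℓ α γ P u) (t : Fin T) (x : Fin n) :
    conjFn (ℓ t x) (fun y => -(α t x y * P t + u t.succ y)) =
      ↑(γ t.castSucc x - u t.castSucc x) := by
  have e := hdp.1 t x
  rw [dpCost] at e
  generalize conjFn (ℓ t x) (fun y => -(α t x y * P t + u t.succ y)) = d at e ⊢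
  induction d using EReal.rec with
  | bot => simp at e
  | top => simp at e
  | coe d =>
    rw [← EReal.coe_add, EReal.coe_eq_coe_iff] at e
    rw [EReal.coe_eq_coe_iff]
    linarith

theorem coe_le_bellman (hdp : IsDP ℓ α γ P u) (t : Fin T) (x : Fin n)
    (ρ : Fin n → ℝ) :
    (u t.castSucc x : EReal) ≤ bellman ℓ α γ P t x ρ (fun y => ↑(u t.succ y)) := by
  rw [bellman_coe]
  calc (u t.castSucc x : EReal)
      = ↑(∑ y, ρ y * -(α t x y * P t + u t.succ y) - (γ t.castSucc x - u t.castSucc x)) +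
          ↑(γ t.castSucc x + ∑ y, ρ y * (α t x y * P t + u t.succ y)) := by
        rw [← EReal.coe_add, sum_mul_neg_sub_add]
    _ ≤ _ := by gcongr; exact coe_sum_mul_sub_le_of_conjFn_eq (hdp.conjFn_eq t x) ρ

theorem exists_bellman_lt (hdp : IsDP ℓ α γ P u) (t : Fin T) (x : Fin n)
    (hdom : ∀ ρ, ℓ t x ρ ≠ ⊤ → ρ ∈ simplex n) {ε : ℝ} (hε : 0 < ε) :
    ∃ ρ ∈ simplex n,
      bellman ℓ α γ P t x ρ (fun y => ↑(u t.succ y)) < ↑(u t.castSucc x + ε) := by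
  obtain ⟨ρ, hρ⟩ := exists_lt_coe_sum_mul_sub_add_of_conjFn_eq (hdp.conjFn_eq t x) hε
  refine ⟨ρ, hdom ρ hρ.ne_top, ?_⟩
  rw [bellman_coe]
  calc ℓ t x ρ + ↑(γ t.castSucc x + ∑ y, ρ y * (α t x y * P t + u t.succ y))
      < ↑(∑ y, ρ y * -(α t x y * P t + u t.succ y) - (γ t.castSucc x - u t.castSucc x) + ε) +
          ↑(γ t.castSucc x + ∑ y, ρ y * (α t x y * P t + u t.succ y)) :=
        EReal.add_lt_add_right_coe hρ _
    _ = ↑(u t.castSucc x + ε) := by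
        rw [← EReal.coe_add, add_right_comm, sum_mul_neg_sub_add]

theorem coe_le_costFrom (hdp : IsDP ℓ α γ P u) {π : Wsp T n} (hπ : InDelta π)
    (s : Fin (T + 1)) (x : Fin n) : (u s x : EReal) ≤ costFrom ℓ α γ P π s x := by
  induction s using Fin.reverseInduction generalizing x with
  | last => rw [costFrom_last, hdp.2 x]
  | cast t ih =>
    rw [costFrom_castSucc hπ]
    exact (hdp.coe_le_bellman t x (π t x)).trans
      (bellman_mono (fun y => ((hπ t x).1 y).1) fun y => ih y)

theorem exists_costFrom_le (hdp : IsDP ℓ α γ P u)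
    (hdom : ∀ t x ρ, ℓ t x ρ ≠ ⊤ → ρ ∈ simplex n) (s : Fin (T + 1)) {ε : ℝ} (hε : 0 < ε) :
    ∃ π, InDelta π ∧ ∀ x, costFrom ℓ α γ P π s x ≤ ↑(u s x + ε) := by
  induction s using Fin.reverseInduction generalizing ε with
  | last =>
    obtain ⟨π, hπ⟩ := exists_inDelta (T := T) (n := n)
    refine ⟨π, hπ, fun x => ?_⟩
    rw [costFrom_last, ← hdp.2 x]
    exact EReal.coe_le_coe_iff.2 (by linarith)
  | cast t ih =>
    obtain ⟨π₀, hπ₀, hle⟩ := ih (half_pos hε)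
    choose ρ hρ hlt using fun x => hdp.exists_bellman_lt t x (hdom t x) (half_pos hε)
    set π := Function.update π₀ t ρ
    have hπ : InDelta π := by
      intro r
      rcases eq_or_ne r t with rfl | h
      · simpa [π] using hρ
      · simpa [π, h] using hπ₀ r
    have hπ₀π : costFrom ℓ α γ P π t.succ = costFrom ℓ α γ P π₀ t.succ :=
      funext <| costFrom_congr fun r hr => Function.update_of_ne
        (Fin.castSucc_lt_castSucc_iff.1 (lt_of_succ_le_castSucc hr).1).ne' _ _
    refine ⟨π, hπ, fun x => ?_⟩
    calc costFrom ℓ α γ P π t.castSucc x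
        = bellman ℓ α γ P t x (ρ x) (costFrom ℓ α γ P π₀ t.succ) := by
          rw [costFrom_castSucc hπ, hπ₀π, show π t = ρ from Function.update_self ..]
      _ ≤ bellman ℓ α γ P t x (ρ x) (fun y => ↑(u t.succ y) + ↑(ε / 2)) :=
          bellman_mono (fun y => ((hρ x).1 y).1) fun y => (hle y).trans_eq (EReal.coe_add _ _)
      _ = bellman ℓ α γ P t x (ρ x) (fun y => ↑(u t.succ y)) + ↑(ε / 2) :=
          bellman_add_coe (hρ x) _ _
      _ ≤ ↑(u t.castSucc x + ε / 2) + ↑(ε / 2) := by gcongr; exact (hlt x).le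
      _ = ↑(u t.castSucc x + ε) := by rw [← EReal.coe_add, add_assoc, add_halves]

end IsDP

theorem dynamic_programming_representation_general {T n : ℕ}
    (ℓ : LSp T n) (α : ASp T n)
    (hconv : ∀ t x, EProper (ℓ t x) ∧ EConvexOn (ℓ t x) ∧
      LowerSemicontinuous (ℓ t x) ∧ ∀ ρ, ℓ t x ρ ≠ ⊤ → ρ ∈ simplex n)
    (γ : Msp T n) (P : Psp T) (u : Msp T n) (hdp : IsDP ℓ α γ P u) :
    ∀ (t : Fin T) (x : Fin n),
      (↑(u t.castSucc x) : EReal) =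
        ⨅ π ∈ {π : Wsp T n | InDelta π}, expCost ℓ α γ P π t x := by
  intro t x
  simp only [ControlledChain.expCost_eq_costFrom]
  refine le_antisymm (le_iInf₂ fun π hπ => hdp.coe_le_costFrom hπ _ _) ?_
  refine EReal.le_of_forall_lt_iff_le.1 fun z hz => ?_
  obtain ⟨π, hπ, hle⟩ := hdp.exists_costFrom_le (fun t x => (hconv t x).2.2.2) t.castSucc
    (sub_pos.2 (EReal.coe_lt_coe_iff.1 hz))
  exact (iInf₂_le π hπ).trans ((hle x).trans_eq (by rw [add_sub_cancel]))

/-- dynamic programming representation: `U[γ,P](t,x)` equals the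
infimum over Markov policies `π ∈ Δ` of the expected cost of the controlled
Markov chain started from `x` at time `t`. -/
theorem dynamic_programming_representation {T n : ℕ} (hT : 1 ≤ T) (hn : 1 ≤ n)
    (ℓ : LSp T n) (α : ASp T n)
    (hconv : ∀ t x, EProper (ℓ t x) ∧ EConvexOn (ℓ t x) ∧
      LowerSemicontinuous (ℓ t x) ∧ ∀ ρ, ℓ t x ρ ≠ ⊤ → ρ ∈ simplex n)
    (γ : Msp T n) (P : Psp T) (u : Msp T n) (hdp : IsDP ℓ α γ P u) :
    ∀ (t : Fin T) (x : Fin n),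
      (↑(u t.castSucc x) : EReal) =
        ⨅ π ∈ {π : Wsp T n | InDelta π}, expCost ℓ α γ P π t x :=
  dynamic_programming_representation_general ℓ α hconv γ P u hdp

end
end
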